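/- arXiv:2202.09654 — 3 statements merged into one kernel-verified Lean document; each statement's English description precedes it below -/
import Mathlib

section
/- Fix $g \in \mathcal{H}(\mathbb{C})$, natural numbers $n_0 \ge 2$, $v_0$, $N_0$, and pairwise distinct $\theta_1, \dots, \theta_{n_0} \in [0,1)$. Then the set $\bigcup_{m=1}^{\infty} V_g(m, v_0, N_0, n_0)$ is dense in $\mathcal{H}(\mathbb{C})$, where $V_g(m, v_0, N_0, n_0) = \{ f \in \mathcal{H}(\mathbb{C}) : \sup_{|z| \le v_0} |f(z + m e^{2\pi i \theta_j}) - g(z)| < 1/N_0 \text{ for every } j = 1, \dots, n_0 \}$. -/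
open Complex Metric Filter Finset Topology

set_option maxHeartbeats 1000000

-- product near one
lemma aux_prod_sub_one {ι : Type*} (s : Finset ι) (x : ι → ℂ) (η : ℝ) (hη : 0 ≤ η)
    (hx : ∀ i ∈ s, ‖x i - 1‖ ≤ η) :
    ‖(∏ i ∈ s, x i) - 1‖ ≤ (1 + η) ^ s.card - 1 := by
  classical
  induction s using Finset.induction_on with
  | empty => simp
  | insert a t ha ih =>
    have hxa : ‖x a - 1‖ ≤ η := hx a (Finset.mem_insert_self a t)
    have hxa' : ‖x a‖ ≤ 1 + η := by
      calc ‖x a‖ = ‖(x a - 1) + 1‖ := by ring_nf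
        _ ≤ ‖x a - 1‖ + ‖(1:ℂ)‖ := norm_add_le _ _
        _ = ‖x a - 1‖ + 1 := by rw [norm_one]
        _ ≤ 1 + η := by linarith
    have ht : ‖(∏ i ∈ t, x i) - 1‖ ≤ (1 + η) ^ t.card - 1 :=
      ih fun i hi => hx i (Finset.mem_insert_of_mem hi)
    rw [Finset.prod_insert ha, Finset.card_insert_of_notMem ha]
    have : x a * ∏ i ∈ t, x i - 1 = x a * ((∏ i ∈ t, x i) - 1) + (x a - 1) := by ring
    rw [this]
    calc ‖x a * ((∏ i ∈ t, x i) - 1) + (x a - 1)‖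
        ≤ ‖x a‖ * ‖(∏ i ∈ t, x i) - 1‖ + ‖x a - 1‖ := by
          refine le_trans (norm_add_le _ _) ?_
          rw [norm_mul]
      _ ≤ (1 + η) * ((1 + η) ^ t.card - 1) + η := by
          have h1 : (0:ℝ) ≤ (1+η)^t.card - 1 := by
            nlinarith [one_le_pow₀ (by linarith : (1:ℝ) ≤ 1 + η) (n := t.card)]
          gcongr
      _ ≤ (1 + η) ^ (t.card + 1) - 1 := by ring_nf; nlinarith [pow_nonneg (by linarith : (0:ℝ) ≤ 1 + η) t.card]

lemma aux_pow_sub_one (x : ℂ) (L : ℕ) (η : ℝ) (hη : 0 ≤ η) (hx : ‖x - 1‖ ≤ η) :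
    ‖x ^ L - 1‖ ≤ (1 + η) ^ L - 1 := by
  have := aux_prod_sub_one (Finset.range L) (fun _ => x) η hη (fun i _ => hx)
  simpa using this

-- product with one small factor
lemma aux_prod_small {ι : Type*} (s : Finset ι) (x : ι → ℂ) (i₀ : ι) (hi₀ : i₀ ∈ s)
    (a M : ℝ) (hM : 0 ≤ M) (ha : ‖x i₀‖ ≤ a) (hx : ∀ i ∈ s, i ≠ i₀ → ‖x i‖ ≤ M) :
    ‖∏ i ∈ s, x i‖ ≤ a * M ^ (s.card - 1) := by
  classical
  rw [← Finset.mul_prod_erase s x hi₀, norm_mul, norm_prod]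
  have h1 : ∏ i ∈ s.erase i₀, ‖x i‖ ≤ M ^ (s.card - 1) := by
    rw [← Finset.card_erase_of_mem hi₀]
    rw [← Finset.prod_const]
    exact Finset.prod_le_prod (fun i _ => norm_nonneg _)
      (fun i hi => hx i (Finset.mem_of_mem_erase hi) (Finset.ne_of_mem_erase hi))
  exact mul_le_mul ha h1 (Finset.prod_nonneg fun i _ => norm_nonneg _) (le_trans (norm_nonneg _) ha)

-- polynomial growth bound
lemma aux_poly_bound (n : ℕ) (a : ℕ → ℂ) (z : ℂ) (M : ℝ) (h1 : 1 ≤ M) (hz : ‖z‖ ≤ M) :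
    ‖∑ i ∈ Finset.range n, a i * z ^ i‖ ≤ (∑ i ∈ Finset.range n, ‖a i‖) * M ^ n := by
  calc ‖∑ i ∈ Finset.range n, a i * z ^ i‖ ≤ ∑ i ∈ Finset.range n, ‖a i * z ^ i‖ :=
        norm_sum_le _ _
    _ ≤ ∑ i ∈ Finset.range n, ‖a i‖ * M ^ n := by
        refine Finset.sum_le_sum fun i hi => ?_
        rw [norm_mul, norm_pow]
        refine mul_le_mul_of_nonneg_left ?_ (norm_nonneg _)
        calc ‖z‖ ^ i ≤ M ^ i := pow_le_pow_left₀ (norm_nonneg _) hz i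
          _ ≤ M ^ n := pow_le_pow_right₀ h1 (Finset.mem_range.1 hi).le
    _ = (∑ i ∈ Finset.range n, ‖a i‖) * M ^ n := by rw [Finset.sum_mul]

lemma aux_div_norm_le {x y : ℂ} {C : ℝ} (hy : y ≠ 0) (h : ‖x‖ ≤ C * ‖y‖) : ‖x / y‖ ≤ C := by
  rw [norm_div, div_le_iff₀ (norm_pos_iff.2 hy)]
  exact h

lemma aux_poly_approx (F : ℂ → ℂ) (hF : Differentiable ℂ F) (ρ : ℝ) (hρ : 0 ≤ ρ)
    (ε : ℝ) (hε : 0 < ε) :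
    ∃ (n : ℕ) (a : ℕ → ℂ), ∀ z ∈ closedBall (0:ℂ) ρ,
      ‖(∑ i ∈ Finset.range n, a i * z ^ i) - F z‖ < ε := by
  set R : NNReal := ρ.toNNReal + 2 with hRdef
  have hR : 0 < R := by positivity
  have hps : HasFPowerSeriesOnBall F (cauchyPowerSeries F 0 R) 0 R :=
    (hF.differentiableOn).hasFPowerSeriesOnBall hR
  set p := cauchyPowerSeries F 0 R
  set r' : NNReal := ρ.toNNReal + 1 with hr'def
  have hr' : (r' : ENNReal) < (R : ENNReal) := by
    rw [ENNReal.coe_lt_coe]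
    simp only [hr'def, hRdef]
    exact add_lt_add_right one_lt_two _
  have htu := hps.tendstoUniformlyOn hr'
  rw [Metric.tendstoUniformlyOn_iff] at htu
  obtain ⟨n, hn⟩ := (htu ε hε).exists
  refine ⟨n, p.coeff, fun z hz => ?_⟩
  have hzball : z ∈ Metric.ball (0:ℂ) r' := by
    rw [mem_ball_zero_iff]
    have : ‖z‖ ≤ ρ := by rwa [mem_closedBall_zero_iff] at hz
    have : (r' : ℝ) = ρ + 1 := by
      simp [hr'def, Real.coe_toNNReal ρ hρ]
    linarith
  have := hn z hzball
  rw [dist_eq_norm] at this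
  have hsum : p.partialSum n z = ∑ i ∈ Finset.range n, p.coeff i * z ^ i := by
    unfold FormalMultilinearSeries.partialSum
    refine Finset.sum_congr rfl fun i _ => ?_
    rw [p.apply_eq_pow_smul_coeff, smul_eq_mul, mul_comm]
  rw [hsum] at this
  rw [norm_sub_rev]
  simpa using this

lemma aux_tendsto1 (C c : ℝ) (T : ℕ) :
    Tendsto (fun m : ℕ => C * ((1 + c / m) ^ T - 1)) atTop (𝓝 0) := by
  have h := tendsto_const_div_atTop_nhds_zero_nat c
  have h2 : Tendsto (fun m : ℕ => (1 + c / m : ℝ)) atTop (𝓝 (1 + 0)) :=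
    tendsto_const_nhds.add h
  have h3 := ((h2.pow T).sub (tendsto_const_nhds (x := (1:ℝ)))).const_mul C
  simpa using h3

lemma aux_tendsto2 (C c A : ℝ) (d L : ℕ) (h : d < L) :
    Tendsto (fun m : ℕ => C * (c * m) ^ d * (A / m) ^ L) atTop (𝓝 0) := by
  have hev : ∀ᶠ m : ℕ in atTop,
      (C * c ^ d * A ^ L) * ((m:ℝ)⁻¹) ^ (L - d) = C * (c * m) ^ d * (A / m) ^ L := by
    filter_upwards [eventually_ge_atTop 1] with m hm
    have hm0 : (m:ℝ) ≠ 0 := by positivity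
    have hL : (m:ℝ) ^ L = (m:ℝ) ^ d * (m:ℝ) ^ (L - d) := by
      rw [← pow_add, Nat.add_sub_cancel' h.le]
    rw [mul_pow, div_pow]
    field_simp
    rw [hL]
    field_simp
    rw [one_div, inv_pow, inv_mul_cancel_right₀ (pow_ne_zero _ hm0)]
  have h1 : Tendsto (fun m : ℕ => ((m:ℝ)⁻¹) ^ (L - d)) atTop (𝓝 0) := by
    have := (tendsto_inv_atTop_zero.comp (tendsto_natCast_atTop_atTop (R := ℝ))).pow (L - d)
    rwa [zero_pow (by omega : L - d ≠ 0)] at this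
  have h2 := h1.const_mul (C * c ^ d * A ^ L)
  rw [mul_zero] at h2
  exact h2.congr' hev

lemma aux_key (g h : ℂ → ℂ) (hg : Differentiable ℂ g) (hh : Differentiable ℂ h)
    {n₀ : ℕ} (u : Fin n₀ → ℂ) (hu : ∀ j, ‖u j‖ = 1) (huinj : Function.Injective u)
    (v₀ : ℝ) (hv₀ : 0 ≤ v₀) (εg : ℝ) (hεg : 0 < εg) (K : Set ℂ) (hK : IsCompact K)
    (ε : ℝ) (hε : 0 < ε) :
    ∃ (f : ℂ → ℂ) (m : ℕ), Differentiable ℂ f ∧ 1 ≤ m ∧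
      (∀ x ∈ K, ‖f x - h x‖ < ε) ∧
      ∀ j, ∀ z ∈ closedBall (0:ℂ) v₀, ‖f (z + m * u j) - g z‖ < εg := by
  classical
  obtain ⟨R₀, hR₀⟩ := hK.isBounded.subset_closedBall 0
  set R : ℝ := max R₀ (v₀ + 1) with hRdef
  have hKR : K ⊆ closedBall 0 R := hR₀.trans (closedBall_subset_closedBall (le_max_left _ _))
  have hR1 : 1 ≤ R := le_trans (by linarith) (le_max_right _ _)
  have hRv : v₀ ≤ R := le_trans (by linarith) (le_max_right _ _)
  have hR0 : (0:ℝ) < R := by linarith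
  obtain ⟨nP, a, hPa⟩ := aux_poly_approx h hh R (by linarith) (ε/2) (by linarith)
  obtain ⟨nQ, b, hQb⟩ := aux_poly_approx g hg v₀ hv₀ (εg/2) (by linarith)
  set P : ℂ → ℂ := fun z => ∑ i ∈ Finset.range nP, a i * z ^ i with hPdef
  set Q : ℂ → ℂ := fun z => ∑ i ∈ Finset.range nQ, b i * z ^ i with hQdef
  set CP : ℝ := ∑ i ∈ Finset.range nP, ‖a i‖ with hCPdef
  set CQ : ℝ := ∑ i ∈ Finset.range nQ, ‖b i‖ with hCQdef
  have hCP : 0 ≤ CP := Finset.sum_nonneg fun _ _ => norm_nonneg _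
  have hCQ : 0 ≤ CQ := Finset.sum_nonneg fun _ _ => norm_nonneg _
  -- separation constant
  set S : ℝ := 1 + ∑ j : Fin n₀, ∑ k : Fin n₀, (if j ≠ k then ‖u j - u k‖⁻¹ else 0) with hSdef
  have hS1 : 1 ≤ S := by
    have hsum0 : (0:ℝ) ≤ ∑ j : Fin n₀, ∑ k : Fin n₀, (if j ≠ k then ‖u j - u k‖⁻¹ else 0) := by
      refine Finset.sum_nonneg fun j _ => Finset.sum_nonneg fun k _ => ?_
      split <;> positivity
    rw [hSdef]
    linarith
  have hS0 : (0:ℝ) < S := by linarith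
  have husub : ∀ j k : Fin n₀, j ≠ k → (0:ℝ) < ‖u j - u k‖ := fun j k hjk =>
    norm_pos_iff.2 (sub_ne_zero.2 fun e => hjk (huinj e))
  have hsep : ∀ j k : Fin n₀, j ≠ k → 1 ≤ S * ‖u j - u k‖ := by
    intro j k hjk
    have hpos := husub j k hjk
    have hterm : ‖u j - u k‖⁻¹ ≤ S := by
      have h1 : (if j ≠ k then ‖u j - u k‖⁻¹ else 0) ≤
          ∑ k' : Fin n₀, (if j ≠ k' then ‖u j - u k'‖⁻¹ else 0) := by
        refine Finset.single_le_sum (f := fun k' => if j ≠ k' then ‖u j - u k'‖⁻¹ else 0)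
          (fun k' _ => ?_) (Finset.mem_univ k)
        split <;> positivity
      have h2 : (∑ k' : Fin n₀, (if j ≠ k' then ‖u j - u k'‖⁻¹ else 0)) ≤
          ∑ j' : Fin n₀, ∑ k' : Fin n₀, (if j' ≠ k' then ‖u j' - u k'‖⁻¹ else 0) := by
        refine Finset.single_le_sum
          (f := fun j' => ∑ k' : Fin n₀, (if j' ≠ k' then ‖u j' - u k'‖⁻¹ else 0))
          (fun j' _ => Finset.sum_nonneg fun k' _ => ?_) (Finset.mem_univ j)
        split <;> positivity
      rw [if_pos hjk] at h1
      have := le_trans h1 h2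
      rw [hSdef]; linarith
    have := mul_le_mul_of_nonneg_right hterm hpos.le
    rwa [inv_mul_cancel₀ hpos.ne'] at this
  have hd2 : ∀ j k : Fin n₀, ‖u j - u k‖ ≤ 2 := by
    intro j k
    calc ‖u j - u k‖ ≤ ‖u j‖ + ‖u k‖ := norm_sub_le _ _
      _ = 2 := by rw [hu, hu]; norm_num
  set L : ℕ := nP + nQ + 1 with hLdef
  set MP : ℝ := CP * R ^ nP with hMPdef
  set MQ : ℝ := CQ * R ^ nQ with hMQdef
  set A1 : ℝ := R * (2*S) ^ (n₀ - 1) with hA1def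
  set A2 : ℝ := v₀ * 3 ^ (n₀ - 1) with hA2def
  set A3 : ℝ := v₀ * S * (3*S) ^ (n₀ - 1) with hA3def
  clear_value R P Q CP CQ S
  have hA1 : 0 ≤ A1 := by
    rw [hA1def]
    exact mul_nonneg (by linarith) (pow_nonneg (by linarith) _)
  have hA2 : 0 ≤ A2 := by
    rw [hA2def]
    positivity
  have hA3 : 0 ≤ A3 := by
    rw [hA3def]
    exact mul_nonneg (mul_nonneg hv₀ (by linarith)) (pow_nonneg (by linarith) _)
  clear_value L MP MQ A1 A2 A3
  -- eventual bounds
  have hev1 : ∀ᶠ m : ℕ in atTop, R + v₀ + 1 ≤ (m:ℝ) :=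
    (tendsto_natCast_atTop_atTop (R := ℝ)).eventually_ge_atTop (R + v₀ + 1)
  have hev2 := (aux_tendsto1 MP R (n₀ * L)).eventually (gt_mem_nhds (by linarith : (0:ℝ) < ε/4))
  have hev3 := (aux_tendsto2 (n₀ * CQ) 2 A1 nQ L (by omega)).eventually
    (gt_mem_nhds (by linarith : (0:ℝ) < ε/4))
  have hev4 := (aux_tendsto1 MQ (v₀ * S) (n₀ * L)).eventually
    (gt_mem_nhds (by linarith : (0:ℝ) < εg/6))
  have hev5 := (aux_tendsto2 CP 2 A2 nP L (by omega)).eventually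
    (gt_mem_nhds (by linarith : (0:ℝ) < εg/6))
  have hev6 := (aux_tendsto2 (n₀ * CQ) 3 A3 nQ L (by omega)).eventually
    (gt_mem_nhds (by linarith : (0:ℝ) < εg/6))
  obtain ⟨m, hmge, hb1, hb2, hb3, hb4, hb5⟩ :=
    (hev1.and (hev2.and (hev3.and (hev4.and (hev5.and hev6))))).exists
  -- basic facts about m
  have hm1 : (1:ℝ) ≤ (m:ℝ) := by linarith
  have hm0 : (0:ℝ) < (m:ℝ) := by linarith
  have hmnat : 1 ≤ m := by exact_mod_cast hm1
  have hmR : R ≤ (m:ℝ) := by linarith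
  have hmv : v₀ ≤ (m:ℝ) := by linarith
  -- the points
  set c : Fin n₀ → ℂ := fun j => (m:ℂ) * u j with hcdef
  have hcnorm : ∀ j, ‖c j‖ = (m:ℝ) := by
    intro j; simp [hcdef, norm_mul, hu j]
  have hcne : ∀ j, c j ≠ 0 := by
    intro j e
    have := hcnorm j; rw [e, norm_zero] at this; linarith
  have hcsubnorm : ∀ j k, ‖c j - c k‖ = (m:ℝ) * ‖u j - u k‖ := by
    intro j k
    rw [hcdef]
    simp only [← mul_sub, norm_mul]
    simp
  have hcsubne : ∀ j k : Fin n₀, j ≠ k → c j - c k ≠ 0 := by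
    intro j k hjk e
    have h1 := hcsubnorm j k; rw [e, norm_zero] at h1
    have h2 := husub j k hjk
    exact absurd h1.symm (ne_of_gt (mul_pos hm0 h2))
  have hcsub2 : ∀ j k, ‖c j - c k‖ ≤ 2 * m := by
    intro j k; rw [hcsubnorm]
    have h2 := mul_le_mul_of_nonneg_left (hd2 j k) hm0.le
    linarith
  have hcsepS : ∀ j k : Fin n₀, j ≠ k → (m:ℝ) ≤ S * ‖c j - c k‖ := by
    intro j k hjk; rw [hcsubnorm]
    have h2 := mul_le_mul_of_nonneg_left (hsep j k hjk) hm0.le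
    calc (m:ℝ) = m * 1 := (mul_one _).symm
      _ ≤ m * (S * ‖u j - u k‖) := h2
      _ = S * (m * ‖u j - u k‖) := by ring
  -- bump functions
  set φ : Fin n₀ → ℂ → ℂ :=
    fun j z => ∏ k : Fin n₀, (if k = j then z / c j else (z - c k) / (c j - c k)) with hφdef
  set ψ : ℂ → ℂ := fun z => ∏ k : Fin n₀, (1 - z / c k) with hψdef
  set f : ℂ → ℂ :=
    fun z => P z * (ψ z) ^ L + ∑ j : Fin n₀, Q (z - c j) * (φ j z) ^ L with hfdef
  clear_value c φ ψ f
  have hPdiff : Differentiable ℂ P := by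
    rw [hPdef]
    exact Differentiable.fun_sum fun i _ => (differentiable_pow i).const_mul (a i)
  have hQdiff : Differentiable ℂ Q := by
    rw [hQdef]
    exact Differentiable.fun_sum fun i _ => (differentiable_pow i).const_mul (b i)
  have hφdiff : ∀ j, Differentiable ℂ (φ j) := by
    intro j
    rw [hφdef]
    refine Differentiable.fun_finset_prod fun k _ => ?_
    by_cases hkj : k = j
    · simp only [if_pos hkj]
      exact differentiable_id.div_const _
    · simp only [if_neg hkj]
      exact (differentiable_id.sub_const _).div_const _
  have hψdiff : Differentiable ℂ ψ := by
    rw [hψdef]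
    exact Differentiable.fun_finset_prod fun k _ =>
      (differentiable_const _).sub (differentiable_id.div_const _)
  have hfdiff : Differentiable ℂ f := by
    rw [hfdef]
    refine (hPdiff.mul (hψdiff.pow L)).add (Differentiable.fun_sum fun j _ => ?_)
    exact (hQdiff.comp (differentiable_id.sub_const _)).mul ((hφdiff j).pow L)
  have hMP0 : 0 ≤ MP := by rw [hMPdef]; exact mul_nonneg hCP (pow_nonneg (by linarith) _)
  have hMQ0 : 0 ≤ MQ := by rw [hMQdef]; exact mul_nonneg hCQ (pow_nonneg (by linarith) _)
  refine ⟨f, m, hfdiff, hmnat, ?_, ?_⟩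
  · -- approximation on K
    intro x hx
    have hxR : ‖x‖ ≤ R := mem_closedBall_zero_iff.1 (hKR hx)
    have hψpow : ‖(ψ x) ^ L - 1‖ ≤ (1 + R / m) ^ (n₀ * L) - 1 := by
      have hfac : ∀ k : Fin n₀, ‖(1 - x / c k) - 1‖ ≤ R / m := by
        intro k
        have he : (1 - x / c k) - 1 = -(x / c k) := by ring
        rw [he, norm_neg, norm_div, hcnorm]
        gcongr
      have h1 : ‖ψ x - 1‖ ≤ (1 + R / m) ^ n₀ - 1 := by
        simpa [hψdef] using
          aux_prod_sub_one Finset.univ (fun k => 1 - x / c k) (R / m)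
            (div_nonneg (by linarith) hm0.le) (fun k _ => hfac k)
      have hη : (0:ℝ) ≤ (1 + R / m) ^ n₀ - 1 := by
        have h0 : (0:ℝ) ≤ R / m := div_nonneg (by linarith) hm0.le
        linarith [one_le_pow₀ (le_add_of_nonneg_right h0 : (1:ℝ) ≤ 1 + R / m) (n := n₀)]
      have h2 := aux_pow_sub_one (ψ x) L _ hη h1
      have h3 : (1 + ((1 + R / m) ^ n₀ - 1)) = (1 + R / m) ^ n₀ := by ring
      rw [h3] at h2; rwa [← pow_mul] at h2
    have hPx : ‖P x‖ ≤ MP := by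
      rw [hMPdef]
      simpa [hPdef, hCPdef] using aux_poly_bound nP a x R hR1 hxR
    have hφx : ∀ j : Fin n₀, ‖φ j x‖ ≤ A1 / m := by
      intro j
      have hsm : ‖(fun k : Fin n₀ =>
          if k = j then x / c j else (x - c k) / (c j - c k)) j‖ ≤ R / m := by
        simp only [if_pos rfl]
        refine aux_div_norm_le (hcne j) ?_
        rw [hcnorm]
        rw [div_mul_cancel₀ _ (ne_of_gt hm0)]
        exact hxR
      have hot : ∀ k ∈ Finset.univ, k ≠ j → ‖(fun k : Fin n₀ =>
          if k = j then x / c j else (x - c k) / (c j - c k)) k‖ ≤ 2 * S := by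
        intro k _ hkj
        simp only [if_neg hkj]
        refine aux_div_norm_le (hcsubne j k fun e => hkj e.symm) ?_
        have hsep' := hcsepS j k fun e => hkj e.symm
        have hxk : ‖x - c k‖ ≤ R + m := by
          calc ‖x - c k‖ ≤ ‖x‖ + ‖c k‖ := norm_sub_le _ _
            _ ≤ R + m := by rw [hcnorm]; linarith
        linarith [hsep']
      have := aux_prod_small Finset.univ
        (fun k : Fin n₀ => if k = j then x / c j else (x - c k) / (c j - c k)) j
        (Finset.mem_univ j) (R / m) (2 * S) (by linarith) hsm hot
      rw [Finset.card_univ, Fintype.card_fin] at this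
      calc ‖φ j x‖ = ‖∏ k : Fin n₀,
            (if k = j then x / c j else (x - c k) / (c j - c k))‖ := by rw [hφdef]
        _ ≤ (R / m) * (2 * S) ^ (n₀ - 1) := this
        _ = A1 / m := by rw [hA1def, div_mul_eq_mul_div]
    have hQx : ∀ j : Fin n₀, ‖Q (x - c j)‖ ≤ CQ * (2 * m) ^ nQ := by
      intro j
      have hb : ‖x - c j‖ ≤ 2 * m := by
        calc ‖x - c j‖ ≤ ‖x‖ + ‖c j‖ := norm_sub_le _ _
          _ ≤ 2 * m := by rw [hcnorm]; linarith
      simpa [hQdef, hCQdef] using aux_poly_bound nQ b (x - c j) (2 * m) (by linarith) hb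
    have hid : f x - h x =
        (P x - h x) + P x * ((ψ x) ^ L - 1) + ∑ j : Fin n₀, Q (x - c j) * (φ j x) ^ L := by
      rw [hfdef]; ring
    have hsum : ‖∑ j : Fin n₀, Q (x - c j) * (φ j x) ^ L‖ ≤
        (n₀:ℝ) * (CQ * (2 * m) ^ nQ * (A1 / m) ^ L) := by
      calc ‖∑ j : Fin n₀, Q (x - c j) * (φ j x) ^ L‖
          ≤ ∑ j : Fin n₀, ‖Q (x - c j) * (φ j x) ^ L‖ := norm_sum_le _ _
        _ ≤ ∑ _j : Fin n₀, CQ * (2 * m) ^ nQ * (A1 / m) ^ L := by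
            refine Finset.sum_le_sum fun j _ => ?_
            rw [norm_mul, norm_pow]
            refine mul_le_mul (hQx j) (pow_le_pow_left₀ (norm_nonneg _) (hφx j) L)
              (pow_nonneg (norm_nonneg _) L)
              (mul_nonneg hCQ (pow_nonneg (by linarith) _))
        _ = (n₀:ℝ) * (CQ * (2 * m) ^ nQ * (A1 / m) ^ L) := by
            rw [Finset.sum_const, Finset.card_univ, Fintype.card_fin, nsmul_eq_mul]
    have hPhx : ‖P x - h x‖ < ε / 2 := by
      simpa [hPdef] using hPa x (hKR hx)
    have heq2 : (n₀:ℝ) * (CQ * (2 * m) ^ nQ * (A1 / m) ^ L) =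
        (n₀:ℝ) * CQ * (2 * m) ^ nQ * (A1 / m) ^ L := by ring
    have t1 : ‖P x‖ * ‖(ψ x) ^ L - 1‖ ≤ MP * ((1 + R / m) ^ (n₀ * L) - 1) :=
      mul_le_mul hPx hψpow (norm_nonneg _) hMP0
    calc ‖f x - h x‖ = ‖(P x - h x) + P x * ((ψ x) ^ L - 1) +
          ∑ j : Fin n₀, Q (x - c j) * (φ j x) ^ L‖ := by rw [hid]
      _ ≤ ‖(P x - h x) + P x * ((ψ x) ^ L - 1)‖ +
          ‖∑ j : Fin n₀, Q (x - c j) * (φ j x) ^ L‖ := norm_add_le _ _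
      _ ≤ ‖P x - h x‖ + ‖P x‖ * ‖(ψ x) ^ L - 1‖ +
          ‖∑ j : Fin n₀, Q (x - c j) * (φ j x) ^ L‖ := by
          have := norm_add_le (P x - h x) (P x * ((ψ x) ^ L - 1))
          rw [norm_mul] at this
          linarith
      _ < ε := by linarith
  · -- approximation on the translated balls
    intro j z hz
    have hzv : ‖z‖ ≤ v₀ := mem_closedBall_zero_iff.1 hz
    set w : ℂ := z + (m:ℂ) * u j with hwdef
    have hwc : w - c j = z := by rw [hwdef, hcdef]; ring
    have hwm : ‖w‖ ≤ 2 * m := by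
      calc ‖w‖ = ‖z + c j‖ := by rw [hwdef, hcdef]
        _ ≤ ‖z‖ + ‖c j‖ := norm_add_le _ _
        _ ≤ 2 * m := by rw [hcnorm]; linarith
    have hwck : ∀ k, ‖w - c k‖ ≤ 3 * m := by
      intro k
      have he : w - c k = z + (c j - c k) := by rw [hwdef, hcdef]; ring
      rw [he]
      calc ‖z + (c j - c k)‖ ≤ ‖z‖ + ‖c j - c k‖ := norm_add_le _ _
        _ ≤ 3 * m := by have := hcsub2 j k; linarith
    have hφj : ‖(φ j w) ^ L - 1‖ ≤ (1 + v₀ * S / m) ^ (n₀ * L) - 1 := by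
      have hfac : ∀ k : Fin n₀, ‖(fun k : Fin n₀ =>
          if k = j then w / c j else (w - c k) / (c j - c k)) k - 1‖ ≤ v₀ * S / m := by
        intro k
        by_cases hkj : k = j
        · simp only [if_pos hkj]
          rw [div_sub_one (hcne j), hwc]
          refine aux_div_norm_le (hcne j) ?_
          rw [hcnorm]
          have he : v₀ * S / m * (m:ℝ) = v₀ * S := by field_simp
          rw [he]
          calc ‖z‖ ≤ v₀ := hzv
            _ = v₀ * 1 := (mul_one _).symm
            _ ≤ v₀ * S := mul_le_mul_of_nonneg_left hS1 hv₀
        · simp only [if_neg hkj]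
          rw [div_sub_one (hcsubne j k fun e => hkj e.symm)]
          have he : w - c k - (c j - c k) = z := by rw [hwdef, hcdef]; ring
          rw [he]
          refine aux_div_norm_le (hcsubne j k fun e => hkj e.symm) ?_
          have hsep' := hcsepS j k fun e => hkj e.symm
          have key : v₀ ≤ v₀ * S / m * ‖c j - c k‖ := by
            calc v₀ = v₀ / m * (m:ℝ) := by field_simp
              _ ≤ v₀ / m * (S * ‖c j - c k‖) :=
                  mul_le_mul_of_nonneg_left hsep' (div_nonneg hv₀ hm0.le)
              _ = v₀ * S / m * ‖c j - c k‖ := by ring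
          exact le_trans hzv key
      have h1 : ‖φ j w - 1‖ ≤ (1 + v₀ * S / m) ^ n₀ - 1 := by
        simpa [hφdef] using
          aux_prod_sub_one Finset.univ
            (fun k : Fin n₀ => if k = j then w / c j else (w - c k) / (c j - c k))
            (v₀ * S / m) (div_nonneg (mul_nonneg hv₀ hS0.le) hm0.le) (fun k _ => hfac k)
      have hη : (0:ℝ) ≤ (1 + v₀ * S / m) ^ n₀ - 1 := by
        have h0 : (0:ℝ) ≤ v₀ * S / m := div_nonneg (mul_nonneg hv₀ hS0.le) hm0.le
        linarith [one_le_pow₀ (le_add_of_nonneg_right h0 : (1:ℝ) ≤ 1 + v₀ * S / m) (n := n₀)]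
      have h2 := aux_pow_sub_one (φ j w) L _ hη h1
      have h3 : (1 + ((1 + v₀ * S / m) ^ n₀ - 1)) = (1 + v₀ * S / m) ^ n₀ := by ring
      rw [h3] at h2; rwa [← pow_mul] at h2
    have hQz : ‖Q z‖ ≤ MQ := by
      rw [hMQdef]
      simpa [hQdef, hCQdef] using aux_poly_bound nQ b z R hR1 (le_trans hzv hRv)
    have hψw : ‖(ψ w) ^ L‖ ≤ (A2 / m) ^ L := by
      rw [norm_pow]
      refine pow_le_pow_left₀ (norm_nonneg _) ?_ L
      have hsm : ‖(fun k : Fin n₀ => 1 - w / c k) j‖ ≤ v₀ / m := by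
        simp only
        have he : (1:ℂ) - w / c j = -((w - c j) / c j) := by
          rw [← neg_div, neg_sub, sub_div, div_self (hcne j)]
        rw [he, norm_neg, hwc]
        refine aux_div_norm_le (hcne j) ?_
        rw [hcnorm, div_mul_cancel₀ _ (ne_of_gt hm0)]
        exact hzv
      have hot : ∀ k ∈ Finset.univ, k ≠ j →
          ‖(fun k : Fin n₀ => 1 - w / c k) k‖ ≤ 3 := by
        intro k _ _
        simp only
        have hdd : ‖w‖ / (m:ℝ) ≤ 2 := by rw [div_le_iff₀ hm0]; linarith
        calc ‖(1:ℂ) - w / c k‖ ≤ ‖(1:ℂ)‖ + ‖w / c k‖ := norm_sub_le _ _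
          _ = 1 + ‖w‖ / m := by rw [norm_one, norm_div, hcnorm]
          _ ≤ 3 := by linarith
      have := aux_prod_small Finset.univ (fun k : Fin n₀ => 1 - w / c k) j
        (Finset.mem_univ j) (v₀ / m) 3 (by norm_num) hsm hot
      rw [Finset.card_univ, Fintype.card_fin] at this
      calc ‖ψ w‖ = ‖∏ k : Fin n₀, (1 - w / c k)‖ := by rw [hψdef]
        _ ≤ (v₀ / m) * 3 ^ (n₀ - 1) := this
        _ = A2 / m := by rw [hA2def, div_mul_eq_mul_div]
    have hPw : ‖P w‖ ≤ CP * (2 * m) ^ nP := by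
      simpa [hPdef, hCPdef] using aux_poly_bound nP a w (2 * m) (by linarith) hwm
    have hothers : ∀ j' ∈ Finset.univ.erase j,
        ‖Q (w - c j') * (φ j' w) ^ L‖ ≤ CQ * (3 * m) ^ nQ * (A3 / m) ^ L := by
      intro j' hj'
      have hj'ne : j' ≠ j := Finset.ne_of_mem_erase hj'
      have hQ' : ‖Q (w - c j')‖ ≤ CQ * (3 * m) ^ nQ := by
        simpa [hQdef, hCQdef] using aux_poly_bound nQ b (w - c j') (3 * m) (by linarith)
          (hwck j')
      have hφ' : ‖φ j' w‖ ≤ A3 / m := by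
        have hsm : ‖(fun k : Fin n₀ =>
            if k = j' then w / c j' else (w - c k) / (c j' - c k)) j‖ ≤ v₀ * S / m := by
          simp only [if_neg (fun e => hj'ne e.symm : ¬ j = j')]
          rw [hwc]
          refine aux_div_norm_le (hcsubne j' j hj'ne) ?_
          have hsep' := hcsepS j' j hj'ne
          have key : v₀ ≤ v₀ * S / m * ‖c j' - c j‖ := by
            calc v₀ = v₀ / m * (m:ℝ) := by field_simp
              _ ≤ v₀ / m * (S * ‖c j' - c j‖) :=
                  mul_le_mul_of_nonneg_left hsep' (div_nonneg hv₀ hm0.le)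
              _ = v₀ * S / m * ‖c j' - c j‖ := by ring
          exact le_trans hzv key
        have hot : ∀ k ∈ Finset.univ, k ≠ j → ‖(fun k : Fin n₀ =>
            if k = j' then w / c j' else (w - c k) / (c j' - c k)) k‖ ≤ 3 * S := by
          intro k _ _
          by_cases hkj' : k = j'
          · simp only [if_pos hkj']
            refine aux_div_norm_le (hcne j') ?_
            rw [hcnorm]
            have h23 : (2:ℝ) * m ≤ 3 * S * m :=
              mul_le_mul_of_nonneg_right (by linarith) hm0.le
            linarith
          · simp only [if_neg hkj']
            refine aux_div_norm_le (hcsubne j' k fun e => hkj' e.symm) ?_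
            have hsep' := hcsepS j' k fun e => hkj' e.symm
            linarith [hwck k]
        have := aux_prod_small Finset.univ
          (fun k : Fin n₀ => if k = j' then w / c j' else (w - c k) / (c j' - c k)) j
          (Finset.mem_univ j) (v₀ * S / m) (3 * S) (by linarith) hsm hot
        rw [Finset.card_univ, Fintype.card_fin] at this
        calc ‖φ j' w‖ = ‖∏ k : Fin n₀,
              (if k = j' then w / c j' else (w - c k) / (c j' - c k))‖ := by rw [hφdef]
          _ ≤ (v₀ * S / m) * (3 * S) ^ (n₀ - 1) := this
          _ = A3 / m := by rw [hA3def, div_mul_eq_mul_div]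
      calc ‖Q (w - c j') * (φ j' w) ^ L‖ = ‖Q (w - c j')‖ * ‖φ j' w‖ ^ L := by
            rw [norm_mul, norm_pow]
        _ ≤ CQ * (3 * m) ^ nQ * (A3 / m) ^ L := by
            refine mul_le_mul hQ' (pow_le_pow_left₀ (norm_nonneg _) hφ' L)
              (pow_nonneg (norm_nonneg _) L)
              (mul_nonneg hCQ (pow_nonneg (by linarith) _))
    have hsum2 : ‖∑ j' ∈ Finset.univ.erase j, Q (w - c j') * (φ j' w) ^ L‖ ≤
        (n₀:ℝ) * (CQ * (3 * m) ^ nQ * (A3 / m) ^ L) := by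
      have hconst0 : (0:ℝ) ≤ CQ * (3 * m) ^ nQ * (A3 / m) ^ L := by
        refine mul_nonneg (mul_nonneg hCQ (pow_nonneg (by linarith) _))
          (pow_nonneg (div_nonneg hA3 hm0.le) _)
      calc ‖∑ j' ∈ Finset.univ.erase j, Q (w - c j') * (φ j' w) ^ L‖
          ≤ ∑ j' ∈ Finset.univ.erase j, ‖Q (w - c j') * (φ j' w) ^ L‖ := norm_sum_le _ _
        _ ≤ ∑ _j' ∈ Finset.univ.erase j, CQ * (3 * m) ^ nQ * (A3 / m) ^ L :=
            Finset.sum_le_sum hothers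
        _ = ((Finset.univ.erase j).card : ℝ) * (CQ * (3 * m) ^ nQ * (A3 / m) ^ L) := by
            rw [Finset.sum_const, nsmul_eq_mul]
        _ ≤ (n₀:ℝ) * (CQ * (3 * m) ^ nQ * (A3 / m) ^ L) := by
            refine mul_le_mul_of_nonneg_right ?_ hconst0
            have : (Finset.univ.erase j).card ≤ n₀ := by
              calc (Finset.univ.erase j).card ≤ (Finset.univ : Finset (Fin n₀)).card :=
                    Finset.card_le_card (Finset.erase_subset _ _)
                _ = n₀ := by rw [Finset.card_univ, Fintype.card_fin]
            exact_mod_cast this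
    have hidg : f w - g z = (Q z - g z) + Q z * ((φ j w) ^ L - 1) + P w * (ψ w) ^ L +
        ∑ j' ∈ Finset.univ.erase j, Q (w - c j') * (φ j' w) ^ L := by
      have hsplit : (∑ j' : Fin n₀, Q (w - c j') * (φ j' w) ^ L) =
          Q z * (φ j w) ^ L + ∑ j' ∈ Finset.univ.erase j, Q (w - c j') * (φ j' w) ^ L := by
        rw [← hwc]
        exact (Finset.add_sum_erase Finset.univ
          (fun j' => Q (w - c j') * (φ j' w) ^ L) (Finset.mem_univ j)).symm
      rw [hfdef]
      simp only
      rw [hsplit]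
      ring
    have hQgz : ‖Q z - g z‖ < εg / 2 := by simpa [hQdef] using hQb z hz
    have t2 : ‖Q z‖ * ‖(φ j w) ^ L - 1‖ ≤ MQ * ((1 + v₀ * S / m) ^ (n₀ * L) - 1) :=
      mul_le_mul hQz hφj (norm_nonneg _) hMQ0
    have t3 : ‖P w‖ * ‖(ψ w) ^ L‖ ≤ CP * (2 * m) ^ nP * (A2 / m) ^ L :=
      mul_le_mul hPw hψw (norm_nonneg _) (mul_nonneg hCP (pow_nonneg (by linarith) _))
    have heq5 : (n₀:ℝ) * (CQ * (3 * m) ^ nQ * (A3 / m) ^ L) =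
        (n₀:ℝ) * CQ * (3 * m) ^ nQ * (A3 / m) ^ L := by ring
    calc ‖f w - g z‖ = ‖(Q z - g z) + Q z * ((φ j w) ^ L - 1) + P w * (ψ w) ^ L +
          ∑ j' ∈ Finset.univ.erase j, Q (w - c j') * (φ j' w) ^ L‖ := by rw [hidg]
      _ ≤ ‖(Q z - g z) + Q z * ((φ j w) ^ L - 1) + P w * (ψ w) ^ L‖ +
          ‖∑ j' ∈ Finset.univ.erase j, Q (w - c j') * (φ j' w) ^ L‖ := norm_add_le _ _
      _ ≤ ‖Q z - g z‖ + ‖Q z‖ * ‖(φ j w) ^ L - 1‖ + ‖P w‖ * ‖(ψ w) ^ L‖ +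
          ‖∑ j' ∈ Finset.univ.erase j, Q (w - c j') * (φ j' w) ^ L‖ := by
          have u1 := norm_add_le ((Q z - g z) + Q z * ((φ j w) ^ L - 1)) (P w * (ψ w) ^ L)
          have u2 := norm_add_le (Q z - g z) (Q z * ((φ j w) ^ L - 1))
          rw [norm_mul] at u1 u2
          linarith
      _ < εg := by linarith

/-- The space `𝓗(ℂ)` of entire functions, with the topology of uniform convergence on
compact sets (the compact-open topology, induced from `C(ℂ, ℂ)`). -/
def Entire : Type := {f : C(ℂ, ℂ) // Differentiable ℂ f}

noncomputable instance : TopologicalSpace Entire := instTopologicalSpaceSubtype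

theorem stmt_6 (g : Entire) (n₀ : ℕ) (hn₀ : 2 ≤ n₀) (v₀ N₀ : ℕ) (hN₀ : 1 ≤ N₀)
    (θ : Fin n₀ → ℝ) (hθ : ∀ j, θ j ∈ Set.Ico (0 : ℝ) 1) (hinj : Function.Injective θ) :
    Dense (⋃ m ∈ {m : ℕ | 1 ≤ m},
      {f : Entire | ∀ j : Fin n₀, ∀ z ∈ closedBall (0 : ℂ) v₀,
        ‖f.1 (z + (m : ℂ) * Complex.exp (2 * Real.pi * Complex.I * θ j)) - g.1 z‖
          < 1 / N₀}) := by
  classical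
  set u : Fin n₀ → ℂ := fun j => Complex.exp (2 * Real.pi * Complex.I * θ j) with hudef
  have hu : ∀ j, ‖u j‖ = 1 := by
    intro j
    rw [hudef]
    simp only [Complex.norm_exp]
    have : (2 * (Real.pi:ℂ) * Complex.I * (θ j : ℂ)).re = 0 := by
      simp [Complex.mul_re, Complex.mul_im]
    rw [this, Real.exp_zero]
  have h2πI : (2 * (Real.pi:ℂ) * Complex.I) ≠ 0 :=
    mul_ne_zero (mul_ne_zero two_ne_zero (Complex.ofReal_ne_zero.2 Real.pi_ne_zero))
      Complex.I_ne_zero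
  have huinj : Function.Injective u := by
    intro j k hjk
    rw [hudef] at hjk
    simp only at hjk
    rw [Complex.exp_eq_exp_iff_exists_int] at hjk
    obtain ⟨n, hn⟩ := hjk
    have hcancel : (θ j : ℂ) = (θ k : ℂ) + (n : ℂ) := by
      apply mul_left_cancel₀ h2πI
      rw [hn]
      ring
    have hre : θ j = θ k + (n : ℝ) := by
      have := congrArg Complex.re hcancel
      simpa using this
    have hθj := hθ j
    have hθk := hθ k
    rw [Set.mem_Ico] at hθj hθk
    have hn0 : n = 0 := by
      have h1 : (-1 : ℝ) < (n:ℝ) := by linarith [hθj.1, hθj.2, hθk.1, hθk.2]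
      have h2 : (n:ℝ) < 1 := by linarith [hθj.1, hθj.2, hθk.1, hθk.2]
      have h1' : (-1 : ℤ) < n := by exact_mod_cast h1
      have h2' : n < 1 := by exact_mod_cast h2
      omega
    apply hinj
    rw [hre, hn0]
    simp
  refine fun h => ?_
  have hbC := (Metric.uniformity_basis_dist (α := ℂ)).compactConvergenceUniformity
    (α := ℂ)
  have hbasis := nhds_basis_uniformity' hbC (x := h.1)
  have hb : (𝓝 h).HasBasis (fun p : Set ℂ × ℝ => IsCompact p.1 ∧ 0 < p.2)
      (fun p => Subtype.val ⁻¹'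
        {y : C(ℂ, ℂ) | ∀ x ∈ p.1, (h.1 x, y x) ∈ {q : ℂ × ℂ | dist q.1 q.2 < p.2}}) := by
    have hcom : (𝓝 h) = Filter.comap (Subtype.val : Entire → C(ℂ, ℂ)) (𝓝 h.1) :=
      nhds_induced _ _
    rw [hcom]
    exact hbasis.comap _
  rw [mem_closure_iff_nhds_basis' hb]
  rintro ⟨K, ε⟩ ⟨hK, hε⟩
  have hεg : (0:ℝ) < 1 / (N₀:ℝ) := by
    have : (0:ℝ) < (N₀:ℝ) := by exact_mod_cast Nat.lt_of_lt_of_le Nat.zero_lt_one hN₀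
    positivity
  obtain ⟨F, m, hFdiff, hm, hFK, hFg⟩ := aux_key g.1 h.1 g.2 h.2 u hu huinj
    ((v₀:ℕ):ℝ) (Nat.cast_nonneg _) (1 / (N₀:ℝ)) hεg K hK ε hε
  refine ⟨⟨⟨F, hFdiff.continuous⟩, hFdiff⟩, ?_, ?_⟩
  · simp only [Set.mem_preimage, Set.mem_setOf_eq, ContinuousMap.coe_mk]
    intro x hx
    have := hFK x hx
    rw [dist_eq_norm, norm_sub_rev]
    exact this
  · refine Set.mem_iUnion₂.2 ⟨m, hm, ?_⟩
    intro j z hz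
    have := hFg j z hz
    simp only [ContinuousMap.coe_mk]
    exact this
end

section
/- With the notation below, $V \subseteq SA$: every function $f$ in $V = \bigcap_{v, N, k \ge 1, n \ge 2} \bigcup_{s \ge 1} V_{p_k}(m_s, v, N, n)$ has the simultaneous approximation property, i.e., for every $g \in \mathcal{H}(\mathbb{C})$ there is a sequence $(\lambda_n)$ in $\{m_s : s \in \mathbb{N}\}$ such that for every $a \in \Theta$ and every compact $K \subseteq \mathbb{C}$, $\sup_{z \in K} |f(z + \lambda_n e^{2\pi i a}) - g(z)| \to 0$. -/
open Complex Metric Filter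

/-- `Vset g w v N` : entire functions `f` with `sup_{|z| ≤ v} |f(z + w) - g(z)| < 1/N`. -/
def Vset (g : Entire) (w : ℂ) (v N : ℕ) : Set Entire :=
  {f : Entire | ∀ z ∈ closedBall (0 : ℂ) v, ‖f.1 (z + w) - g.1 z‖ < 1 / N}

/-- The set `SA` of entire functions achieving simultaneous approximation. -/
def SAset (ms : ℕ → ℂ) (θ : ℕ → ℝ) : Set Entire :=
  {f : Entire | ∀ g : Entire, ∃ lam : ℕ → ℂ, (∀ n, lam n ∈ Set.range ms) ∧
    ∀ a ∈ Set.range θ, ∀ K : Set ℂ, IsCompact K →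
      TendstoUniformlyOn
        (fun n z => f.1 (z + lam n * Complex.exp (2 * Real.pi * Complex.I * a)))
        g.1 atTop K}

lemma dense_approx (p : ℕ → Entire) (hp : Dense (Set.range p)) (g : Entire)
    (K : Set ℂ) (hK : IsCompact K) (ε : ℝ) (hε : 0 < ε) :
    ∃ k, ∀ z ∈ K, ‖(p k).1 z - g.1 z‖ < ε := by
  have hg : g ∈ closure (Set.range p) := hp g
  rw [mem_closure_iff_nhds] at hg
  have hV : {q : ℂ × ℂ | dist q.1 q.2 < ε} ∈ uniformity ℂ := dist_mem_uniformity hε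
  have hW : {fg : C(ℂ, ℂ) × C(ℂ, ℂ) | ∀ x ∈ K, (fg.1 x, fg.2 x) ∈
      {q : ℂ × ℂ | dist q.1 q.2 < ε}} ∈ uniformity C(ℂ, ℂ) := by
    rw [ContinuousMap.mem_compactConvergence_entourage_iff]
    exact ⟨K, _, hK, hV, subset_rfl⟩
  have hball : UniformSpace.ball (g.1 : C(ℂ, ℂ)) _ ∈ nhds (g.1 : C(ℂ, ℂ)) :=
    UniformSpace.ball_mem_nhds _ hW
  have ht : {h : Entire | ∀ z ∈ K, dist (g.1 z) (h.1 z) < ε} ∈ nhds g := by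
    have hc : Continuous (fun h : Entire => (h.1 : C(ℂ, ℂ))) := continuous_subtype_val
    exact Filter.mem_of_superset (hc.continuousAt hball) (fun h hh => hh)
  obtain ⟨h, hh1, k, hk⟩ := hg _ ht
  exact ⟨k, fun z hz => by
    have := hh1 z hz
    rw [← hk] at this
    rwa [dist_comm, Complex.dist_eq] at this⟩

theorem stmt_11 (ms : ℕ → ℂ) (hms : ∀ C : ℝ, ∃ s, C < ‖ms s‖)
    (θ : ℕ → ℝ) (hθ : ∀ v, θ v ∈ Set.Ico (0 : ℝ) 1) (hinj : Function.Injective θ)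
    (p : ℕ → Entire) (hp : Dense (Set.range p)) :
    (⋂ v ∈ {v : ℕ | 1 ≤ v}, ⋂ N ∈ {N : ℕ | 1 ≤ N}, ⋂ k : ℕ, ⋂ n ∈ {n : ℕ | 2 ≤ n},
        ⋃ s : ℕ, ⋂ j ∈ Finset.range n,
          Vset (p k) (ms s * Complex.exp (2 * Real.pi * Complex.I * θ j)) v N) ⊆
      SAset ms θ := by
  intro f hf g
  simp only [Set.mem_iInter, Set.mem_iUnion, Set.mem_setOf_eq] at hf
  -- choose approximating p's
  have hkn : ∀ n : ℕ, ∃ k, ∀ z ∈ closedBall (0 : ℂ) ((n + 1 : ℕ) : ℝ),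
      ‖(p k).1 z - g.1 z‖ < 1 / (2 * (n + 1)) := by
    intro n
    apply dense_approx p hp g _ (isCompact_closedBall _ _)
    positivity
  choose k hk using hkn
  have hsn : ∀ n : ℕ, ∃ s, ∀ j ∈ Finset.range (n + 2),
      f ∈ Vset (p (k n)) (ms s * Complex.exp (2 * Real.pi * Complex.I * θ j))
        (n + 1) (2 * (n + 1)) := by
    intro n
    have := hf (n + 1) (by omega) (2 * (n + 1)) (by omega) (k n) (n + 2) (by omega)
    exact this
  choose s hs using hsn
  refine ⟨fun n => ms (s n), fun n => ⟨s n, rfl⟩, ?_⟩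
  rintro a ⟨j, rfl⟩ K hK
  obtain ⟨R, hR⟩ := hK.isBounded.subset_closedBall 0
  rw [Metric.tendstoUniformlyOn_iff]
  intro ε hε
  obtain ⟨M, hM⟩ := exists_nat_one_div_lt hε
  filter_upwards [eventually_ge_atTop (max M (max j ⌈R⌉₊))] with n hn
  intro x hx
  have hnM : M ≤ n := le_trans (le_max_left _ _) hn
  have hnj : j < n + 2 := by
    have := le_trans (le_trans (le_max_left _ _) (le_max_right M _)) hn
    omega
  have hnR : R ≤ ((n + 1 : ℕ) : ℝ) := by
    have h1 : (⌈R⌉₊ : ℝ) ≤ n := by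
      exact_mod_cast le_trans (le_trans (le_max_right _ _) (le_max_right M _)) hn
    calc R ≤ (⌈R⌉₊ : ℝ) := Nat.le_ceil R
      _ ≤ (n : ℝ) := h1
      _ ≤ ((n + 1 : ℕ) : ℝ) := by push_cast; linarith
  have hxball : x ∈ closedBall (0 : ℂ) ((n + 1 : ℕ) : ℝ) :=
    closedBall_subset_closedBall hnR (hR hx)
  have h1 := hs n j (Finset.mem_range.2 hnj) x hxball
  have h2 := hk n x hxball
  rw [Complex.dist_eq]
  have habs : ‖g.1 x - f.1 (x + ms (s n) * Complex.exp (2 * Real.pi * Complex.I * θ j))‖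
      = ‖f.1 (x + ms (s n) * Complex.exp (2 * Real.pi * Complex.I * θ j)) - g.1 x‖ := by
    rw [norm_sub_rev]
  rw [habs]
  have htri : ‖f.1 (x + ms (s n) * Complex.exp (2 * Real.pi * Complex.I * θ j)) - g.1 x‖
      ≤ ‖f.1 (x + ms (s n) * Complex.exp (2 * Real.pi * Complex.I * θ j)) - (p (k n)).1 x‖
        + ‖(p (k n)).1 x - g.1 x‖ := by
    simpa using norm_sub_le_norm_sub_add_norm_sub _ ((p (k n)).1 x) _
  have hcast : (1 : ℝ) / ((2 * (n + 1) : ℕ) : ℝ) = 1 / (2 * ((n : ℝ) + 1)) := by push_cast; ring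
  rw [hcast] at h1
  have hfin : 1 / (2 * ((n : ℝ) + 1)) + 1 / (2 * ((n : ℝ) + 1)) ≤ 1 / ((M : ℝ) + 1) := by
    rw [← add_div]
    rw [div_le_div_iff₀ (by positivity) (by positivity)]
    have : (M : ℝ) ≤ n := by exact_mod_cast hnM
    nlinarith
  calc ‖f.1 (x + ms (s n) * Complex.exp (2 * Real.pi * Complex.I * θ j)) - g.1 x‖
      ≤ _ + _ := htri
    _ < 1 / (2 * ((n : ℝ) + 1)) + 1 / (2 * ((n : ℝ) + 1)) := by
        exact add_lt_add h1 h2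
    _ ≤ 1 / ((M : ℝ) + 1) := hfin
    _ < ε := hM
end

section
/- Corollary of the main theorem: Let $(m_s)$ be an unbounded sequence of complex numbers and $(\theta_v)$ pairwise distinct in $[0,1)$. Then there exist an entire function $x$ and a sequence $(\lambda_n)$ of indices such that $\rho(T_{v, m_{\lambda_n}}(x), g) \to 0$ as $n \to \infty$ simultaneously for all $v \in \mathbb{N}$, where $g$ is any fixed entire function; i.e., for every compact $K$, $\sup_{z \in K} |x(z + m_{\lambda_n} e^{2\pi i \theta_v}) - g(z)| \to 0$ for every $v$. -/
open Complex Metric Filter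

/-- Compatibility: the complex absolute value as an `AbsoluteValue`, equal to the norm. -/
noncomputable def Complex.abs : AbsoluteValue ℂ ℝ := NormedField.toAbsoluteValue ℂ

theorem Complex.norm_eq_abs (z : ℂ) : ‖z‖ = Complex.abs z := rfl

@[simp] theorem Complex.abs_ofReal (r : ℝ) : Complex.abs (r : ℂ) = |r| := Complex.norm_real r

@[simp] theorem Complex.abs_two : Complex.abs (2 : ℂ) = 2 := by
  rw [← Complex.norm_eq_abs]; norm_num

@[simp] theorem Complex.abs_one' : Complex.abs (1 : ℂ) = 1 := by
  rw [← Complex.norm_eq_abs]; norm_num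

section Construction


noncomputable def sigmaB : ℂ → ℂ := fun w => (1 - (1 - w/2)^6)^2

lemma sigmaB_small {w : ℂ} {ρ : ℝ} (hρ : ρ ≤ 1/5000) (h : Complex.abs w ≤ ρ) :
    Complex.abs (sigmaB w) ≤ ρ/2 := by
  have hρ0 : 0 ≤ ρ := le_trans (Complex.abs.nonneg w) h
  set a : ℂ := 1 - w/2 with ha
  have key : 1 - a^6 = (w/2) * (1 + a + a^2 + a^3 + a^4 + a^5) := by
    rw [ha]; ring
  have habs2 : Complex.abs (w/2) ≤ ρ/2 := by
    rw [map_div₀]; simpa using by linarith [h]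
  have hab2 : Complex.abs a ≤ 2 := by
    calc Complex.abs a ≤ Complex.abs (1:ℂ) + Complex.abs (w/2) := Complex.abs.sub_le_add _ _
      _ ≤ 1 + ρ/2 := by simp; linarith
      _ ≤ 2 := by linarith
  have h1 : ∀ k : ℕ, Complex.abs (a^k) ≤ 2^k := by
    intro k; rw [map_pow]; exact pow_le_pow_left₀ (Complex.abs.nonneg a) hab2 k
  have hsum : Complex.abs (1 + a + a^2 + a^3 + a^4 + a^5) ≤ 96 := by
    have e1 : Complex.abs (1 + a) ≤ 3 := by
      refine le_trans (Complex.abs.add_le _ _) ?_; simp; linarith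
    have e2 : Complex.abs (1 + a + a^2) ≤ 7 := by
      refine le_trans (Complex.abs.add_le _ _) ?_
      have := h1 2; norm_num at this ⊢; linarith
    have e3 : Complex.abs (1 + a + a^2 + a^3) ≤ 15 := by
      refine le_trans (Complex.abs.add_le _ _) ?_
      have := h1 3; norm_num at this ⊢; linarith
    have e4 : Complex.abs (1 + a + a^2 + a^3 + a^4) ≤ 31 := by
      refine le_trans (Complex.abs.add_le _ _) ?_
      have := h1 4; norm_num at this ⊢; linarith
    refine le_trans (Complex.abs.add_le _ _) ?_
    have := h1 5; norm_num at this ⊢; linarith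
  have h16 : Complex.abs (1 - a^6) ≤ 48 * ρ := by
    rw [key, map_mul]
    calc Complex.abs (w/2) * Complex.abs (1 + a + a^2 + a^3 + a^4 + a^5)
        ≤ (ρ/2) * 96 := mul_le_mul habs2 hsum (Complex.abs.nonneg _) (by linarith)
      _ = 48 * ρ := by ring
  have hrw : Complex.abs (sigmaB w) = (Complex.abs (1 - a^6))^2 := by
    rw [sigmaB]; rw [← ha, map_pow]
  rw [hrw]
  calc (Complex.abs (1 - a^6))^2 ≤ (48*ρ)^2 :=
        pow_le_pow_left₀ (Complex.abs.nonneg _) h16 2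
    _ = 2304 * ρ * ρ := by ring
    _ ≤ ρ/2 := by nlinarith

lemma sigmaB_near_one {w : ℂ} (h : Complex.abs (w - 1) ≤ 1/2) :
    Complex.abs (sigmaB w - 1) ≤ 1/2 := by
  set a : ℂ := 1 - w/2 with ha
  have hab : Complex.abs a ≤ 3/4 := by
    have : a = (1:ℂ)/2 - (w - 1)/2 := by rw [ha]; ring
    rw [this]
    calc Complex.abs ((1:ℂ)/2 - (w-1)/2)
        ≤ Complex.abs ((1:ℂ)/2) + Complex.abs ((w-1)/2) := Complex.abs.sub_le_add _ _
      _ ≤ 1/2 + 1/4 := by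
          have : Complex.abs ((w-1)/2) ≤ 1/4 := by rw [map_div₀]; simpa using by linarith
          simp; linarith [this]
      _ ≤ 3/4 := by norm_num
  have h6 : Complex.abs (a^6) ≤ (3/4:ℝ)^6 := by
    rw [map_pow]; exact pow_le_pow_left₀ (Complex.abs.nonneg a) hab 6
  have key : sigmaB w - 1 = (a^6) * (a^6 - 2) := by rw [sigmaB, ← ha]; ring
  rw [key, map_mul]
  have h2 : Complex.abs (a^6 - 2) ≤ (3/4:ℝ)^6 + 2 := by
    calc Complex.abs (a^6 - 2) ≤ Complex.abs (a^6) + Complex.abs (2:ℂ) := Complex.abs.sub_le_add _ _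
      _ ≤ (3/4:ℝ)^6 + 2 := by simp; norm_num at h6 ⊢; linarith
  calc Complex.abs (a^6) * Complex.abs (a^6 - 2) ≤ (3/4:ℝ)^6 * ((3/4:ℝ)^6 + 2) :=
        mul_le_mul h6 h2 (Complex.abs.nonneg _) (by positivity)
    _ ≤ 1/2 := by norm_num

lemma sigmaB_diff : Differentiable ℂ sigmaB := by
  unfold sigmaB; fun_prop

lemma sigmaB_iter_diff (k : ℕ) : Differentiable ℂ (sigmaB^[k]) := by
  induction k with
  | zero => simpa using differentiable_id
  | succ k ih => rw [Function.iterate_succ']; exact sigmaB_diff.comp ih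

lemma bump_exists (ε₁ ε₂ : ℝ) (hε₁ : 0 < ε₁) (hε₂ : 0 < ε₂) :
    ∃ H : ℂ → ℂ, Differentiable ℂ H ∧
      (∀ w, Complex.abs w ≤ 1/5000 → Complex.abs (H w - 1) ≤ ε₁) ∧
      (∀ w, Complex.abs (w - 1) ≤ 1/2 → Complex.abs (H w) ≤ ε₂) := by
  have inv1 : ∀ k : ℕ, ∀ w, Complex.abs w ≤ 1/5000 →
      Complex.abs (sigmaB^[k] w) ≤ (1/5000) * (1/2)^k := by
    intro k
    induction k with
    | zero => intro w hw; simpa using hw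
    | succ k ih =>
        intro w hw
        rw [Function.iterate_succ_apply']
        have h1 := ih w hw
        have h2 : (1/5000 : ℝ) * (1/2)^k ≤ 1/5000 := by
          have : ((1:ℝ)/2)^k ≤ 1 := pow_le_one₀ (by norm_num) (by norm_num)
          nlinarith
        have := sigmaB_small h2 h1
        calc Complex.abs (sigmaB (sigmaB^[k] w)) ≤ ((1/5000) * (1/2)^k)/2 := this
          _ = (1/5000) * (1/2)^(k+1) := by ring
  have inv2 : ∀ k : ℕ, ∀ w, Complex.abs (w - 1) ≤ 1/2 →
      Complex.abs (sigmaB^[k] w - 1) ≤ 1/2 := by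
    intro k
    induction k with
    | zero => intro w hw; simpa using hw
    | succ k ih =>
        intro w hw
        rw [Function.iterate_succ_apply']
        exact sigmaB_near_one (ih w hw)
  set M : ℝ := max 1 (2 * Real.log (1/ε₂) + 1) with hM
  have hM1 : 1 ≤ M := le_max_left _ _
  have hM0 : 0 < M := by linarith
  obtain ⟨k, hk⟩ : ∃ k : ℕ, ((1:ℝ)/2)^k < min 1 (ε₁/2) / (M * (1/5000)) := by
    apply exists_pow_lt_of_lt_one
    · positivity
    · norm_num
  have hkey : M * ((1/5000) * (1/2)^k) ≤ min 1 (ε₁/2) := by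
    have hpos : (0:ℝ) < M * (1/5000) := by positivity
    have := (lt_div_iff₀ hpos).mp hk
    nlinarith [this]
  refine ⟨fun w => Complex.exp (-(M:ℂ) * sigmaB^[k] w), ?_, ?_, ?_⟩
  · apply Differentiable.cexp
    exact Differentiable.mul (differentiable_const _) (sigmaB_iter_diff k)
  · intro w hw
    have h1 := inv1 k w hw
    have habs : Complex.abs (-(M:ℂ) * sigmaB^[k] w) ≤ min 1 (ε₁/2) := by
      rw [map_mul, map_neg_eq_map, Complex.abs_ofReal, abs_of_pos hM0]
      calc M * Complex.abs (sigmaB^[k] w) ≤ M * ((1/5000) * (1/2)^k) := by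
            exact mul_le_mul_of_nonneg_left h1 (le_of_lt hM0)
        _ ≤ min 1 (ε₁/2) := hkey
    have h2 : Complex.abs (-(M:ℂ) * sigmaB^[k] w) ≤ 1 := le_trans habs (min_le_left _ _)
    calc Complex.abs (Complex.exp (-(M:ℂ) * sigmaB^[k] w) - 1)
        ≤ 2 * Complex.abs (-(M:ℂ) * sigmaB^[k] w) := Complex.norm_exp_sub_one_le h2
      _ ≤ 2 * min 1 (ε₁/2) := by linarith [habs]
      _ ≤ ε₁ := by
          have := min_le_right 1 (ε₁/2); linarith
  · intro w hw
    have h1 := inv2 k w hw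
    set Φ := sigmaB^[k] w with hΦ
    have hre : (1:ℝ)/2 ≤ Φ.re := by
      have : (1 - Φ).re ≤ Complex.abs (1 - Φ) := Complex.re_le_norm _
      have habs : Complex.abs (1 - Φ) ≤ 1/2 := by
        rw [show (1 - Φ) = -(Φ - 1) by ring, map_neg_eq_map]; exact h1
      have : 1 - Φ.re ≤ 1/2 := by
        have h3 : (1 - Φ).re = 1 - Φ.re := by simp
        linarith [h3 ▸ le_trans (Complex.re_le_norm (1 - Φ)) habs]
      linarith
    have hrecalc : (-(M:ℂ) * Φ).re = -M * Φ.re := by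
      rw [show -(M:ℂ) = ((-M : ℝ) : ℂ) by push_cast; ring]
      exact Complex.re_ofReal_mul _ _
    rw [← Complex.norm_eq_abs, Complex.norm_exp, hrecalc]
    have hexp : -M * Φ.re ≤ Real.log ε₂ := by
      have hlog : 2 * Real.log (1/ε₂) + 1 ≤ M := le_max_right _ _
      rw [Real.log_div (by norm_num) (ne_of_gt hε₂), Real.log_one] at hlog
      nlinarith [hre, hM0]
    calc Real.exp (-M * Φ.re) ≤ Real.exp (Real.log ε₂) := Real.exp_le_exp.mpr hexp
      _ = ε₂ := Real.exp_log hε₂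

lemma partialSum_eq (p : FormalMultilinearSeries ℂ ℂ ℂ) (D : ℕ) (ζ : ℂ) :
    p.partialSum D ζ = ∑ k ∈ Finset.range D, ζ^k • (p k fun _ => 1) := by
  unfold FormalMultilinearSeries.partialSum
  refine Finset.sum_congr rfl fun k _ => ?_
  have : (fun _ : Fin k => ζ) = fun i : Fin k => ζ • (1:ℂ) := by funext i; simp
  rw [this, (p k).map_smul_univ (fun _ : Fin k => ζ) (fun _ => (1:ℂ))]
  simp

set_option maxHeartbeats 2000000 in
lemma key_lemma (t : ℂ → ℂ) (ht : Differentiable ℂ t) (c : ℂ) (r η ε : ℝ)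
    (hr : 0 < r) (hη : 0 < η) (hη' : η ≤ 1/2) (hε : 0 < ε)
    (hc : 10000 * r / η ≤ Complex.abs c) :
    ∃ P : ℂ → ℂ, Differentiable ℂ P ∧
      (∀ z, Complex.abs (z - c) ≤ r → Complex.abs (P z - t z) ≤ ε) ∧
      (∀ z, (z / c).re ≤ 1 - η → Complex.abs (P z) ≤ ε) := by
  have hcpos : 0 < Complex.abs c := lt_of_lt_of_le (by positivity) hc
  have hc0 : c ≠ 0 := by
    intro h; rw [h] at hcpos; simp at hcpos
  set lam : ℝ := 1/η with hlam
  have hlampos : 0 < lam := by positivity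
  set w : ℂ → ℂ := fun z => (lam:ℂ) * (1 - z/c) with hw
  set y : ℂ → ℂ := fun z => 1 - Complex.exp (-(w z)) with hy
  have hydiff : Differentiable ℂ y := by
    rw [hy, hw]; fun_prop
  -- disk facts
  have hwdisk : ∀ z, Complex.abs (z - c) ≤ r → Complex.abs (w z) ≤ 1/10000 := by
    intro z hz
    rw [hw]
    simp only [map_mul, Complex.abs_ofReal]
    have h1 : Complex.abs (1 - z/c) = Complex.abs (c - z) / Complex.abs c := by
      rw [show (1 : ℂ) - z/c = (c - z)/c by field_simp, map_div₀]
    rw [h1, abs_of_pos hlampos]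
    have h2 : Complex.abs (c - z) ≤ r := by
      rw [show c - z = -(z - c) by ring, map_neg_eq_map]; exact hz
    have hcbig : 10000 * r * lam ≤ Complex.abs c := by
      rw [hlam, mul_one_div]; exact hc
    calc lam * (Complex.abs (c - z) / Complex.abs c)
        ≤ lam * (r / Complex.abs c) := by gcongr
      _ = (lam * r) / Complex.abs c := by ring
      _ ≤ 1/10000 := by
          rw [div_le_iff₀ hcpos]; nlinarith [hcbig, hr, hlampos]
  have hydisk : ∀ z, Complex.abs (z - c) ≤ r → Complex.abs (y z) ≤ 1/5000 := by
    intro z hz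
    have h1 := hwdisk z hz
    have h2 : Complex.abs (-(w z)) ≤ 1 := by rw [map_neg_eq_map]; linarith
    have h3 : Complex.abs (y z) = Complex.abs (Complex.exp (-(w z)) - 1) := by
      rw [hy]; simp only []
      rw [show (1:ℂ) - Complex.exp (-(w z)) = -(Complex.exp (-(w z)) - 1) by ring, map_neg_eq_map]
    rw [h3]
    calc Complex.abs (Complex.exp (-(w z)) - 1) ≤ 2 * Complex.abs (-(w z)) :=
          Complex.norm_exp_sub_one_le h2
      _ ≤ 2 * Complex.abs (w z) := by rw [map_neg_eq_map]
      _ ≤ 1/5000 := by linarith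
  have hwre : ∀ z, (z / c).re ≤ 1 - η → 1 ≤ (w z).re := by
    intro z hz
    have h1 : (w z).re = lam * (1 - (z/c).re) := by
      rw [hw]; simp [Complex.re_ofReal_mul, Complex.sub_re]
    rw [h1, hlam]
    rw [div_mul_eq_mul_div, le_div_iff₀ hη]
    nlinarith
  have hyhalf : ∀ z, (z / c).re ≤ 1 - η → Complex.abs (y z - 1) ≤ 1/2 := by
    intro z hz
    have h1 := hwre z hz
    have h2 : Complex.abs (y z - 1) = Real.exp (-(w z).re) := by
      rw [hy]; simp only []
      rw [show (1:ℂ) - Complex.exp (-(w z)) - 1 = -Complex.exp (-(w z)) by ring,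
        map_neg_eq_map, ← Complex.norm_eq_abs, Complex.norm_exp]
      simp
    rw [h2]
    have h3 : (2:ℝ) ≤ Real.exp 1 := by
      have := Real.add_one_le_exp 1; linarith
    have h4 : Real.exp (-(w z).re) ≤ Real.exp (-1) := by
      apply Real.exp_le_exp.mpr; linarith
    have h5 : Real.exp (-1) ≤ 1/2 := by
      rw [Real.exp_neg]
      rw [inv_le_comm₀ (Real.exp_pos 1) (by norm_num)]
      linarith
    linarith
  have hyhalf2 : ∀ z, (z / c).re ≤ 1 - η → Complex.abs (y z) ≤ 2 := by
    intro z hz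
    have := hyhalf z hz
    calc Complex.abs (y z) = Complex.abs ((y z - 1) + 1) := by ring_nf
      _ ≤ Complex.abs (y z - 1) + Complex.abs (1:ℂ) := Complex.abs.add_le _ _
      _ ≤ 2 := by simp; linarith
  -- the transferred function T
  set T : ℂ → ℂ := fun ζ => t (c * (1 + Complex.log (1 - ζ) / (lam:ℂ))) with hT
  have hlamC : (lam:ℂ) ≠ 0 := by
    exact_mod_cast ne_of_gt hlampos
  have hTy : ∀ z, Complex.abs (z - c) ≤ r → T (y z) = t z := by
    intro z hz
    have h1 : (1:ℂ) - y z = Complex.exp (-(w z)) := by rw [hy]; ring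
    have him : |(-(w z)).im| ≤ 1/10000 := by
      refine le_trans (Complex.abs_im_le_norm _) ?_
      rw [norm_neg]; exact hwdisk z hz
    have hpi := Real.pi_gt_three
    have h2 : Complex.log ((1:ℂ) - y z) = -(w z) := by
      rw [h1]
      apply Complex.log_exp
      · cases' abs_le.mp him with h _; linarith
      · cases' abs_le.mp him with _ h; linarith
    rw [hT]; simp only []
    rw [h2]
    congr 1
    rw [hw]; simp only []
    field_simp
    ring
  -- T is differentiable on a ball
  have hTdiffOn : DifferentiableOn ℂ T (Metric.closedBall (0:ℂ) ((1/2 : NNReal) : ℝ)) := by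
    intro ζ hζ
    apply DifferentiableAt.differentiableWithinAt
    have hζ2 : Complex.abs ζ ≤ 1/2 := by
      rw [Metric.mem_closedBall, dist_zero_right, Complex.norm_eq_abs] at hζ
      simpa using hζ
    have hre : 0 < ((1:ℂ) - ζ).re := by
      have h9 : ζ.re ≤ Complex.abs ζ := Complex.re_le_norm ζ
      have h8 : ((1:ℂ) - ζ).re = 1 - ζ.re := by simp [Complex.sub_re]
      rw [h8]; linarith
    have hslit : (1:ℂ) - ζ ∈ Complex.slitPlane := Or.inl hre
    have hlogd : DifferentiableAt ℂ (fun ξ : ℂ => Complex.log (1 - ξ)) ζ := by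
      have h1 : DifferentiableAt ℂ (fun ξ : ℂ => (1:ℂ) - ξ) ζ := by fun_prop
      exact (Complex.differentiableAt_log hslit).comp ζ h1
    have hinner : DifferentiableAt ℂ (fun ξ : ℂ => c * (1 + Complex.log (1 - ξ) / (lam:ℂ))) ζ := by
      apply DifferentiableAt.const_mul
      apply DifferentiableAt.const_add
      exact hlogd.div_const _
    exact (ht _).comp ζ hinner
  have hps : HasFPowerSeriesOnBall T (cauchyPowerSeries T 0 ((1/2 : NNReal) : ℝ)) 0 (1/2 : NNReal) :=
    hTdiffOn.hasFPowerSeriesOnBall (by norm_num)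
  set p := cauchyPowerSeries T 0 ((1/2 : NNReal) : ℝ) with hp
  obtain ⟨a, haI, C, hC, happrox⟩ :=
    hps.uniform_geometric_approx (r' := (1/100 : NNReal))
      (by rw [ENNReal.coe_lt_coe, ← NNReal.coe_lt_coe]; norm_num)
  obtain ⟨D, hD⟩ := exists_pow_lt_of_lt_one (show (0:ℝ) < ε/(4*C) from div_pos hε (by linarith)) haI.2
  have hCaD : C * a ^ D ≤ ε/4 := by
    rw [lt_div_iff₀ (by positivity : (0:ℝ) < 4*C)] at hD
    nlinarith
  set q : ℂ → ℂ := fun ζ => p.partialSum D ζ with hq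
  have hqdiff : Differentiable ℂ q := by
    have hrw : q = fun ζ => ∑ k ∈ Finset.range D, ζ^k • (p k fun _ => 1) :=
      funext (partialSum_eq p D)
    rw [hrw]
    apply Differentiable.fun_sum
    intro k _
    fun_prop
  obtain ⟨A, hA⟩ := (isCompact_closedBall (0:ℂ) 2).exists_bound_of_continuousOn
    ((p.partialSum_continuous D).continuousOn)
  set A' : ℝ := max A 0 with hA'
  have hTcont : ContinuousOn T (Metric.closedBall (0:ℂ) (1/100)) := by
    apply hTdiffOn.continuousOn.mono
    apply Metric.closedBall_subset_closedBall
    push_cast; norm_num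
  obtain ⟨Cb, hCb⟩ := (isCompact_closedBall (0:ℂ) (1/100)).exists_bound_of_continuousOn hTcont
  set Cb' : ℝ := max Cb 0 with hCb'
  have hCb'0 : 0 ≤ Cb' := le_max_right _ _
  have hA'0 : 0 ≤ A' := le_max_right _ _
  set ε₁ : ℝ := min 1 (ε/(4*(Cb'+1))) with hε₁
  set ε₂ : ℝ := ε/(2*(A'+1)) with hε₂
  obtain ⟨H, hHdiff, hHgood, hHbad⟩ := bump_exists ε₁ ε₂ (by positivity) (by positivity)
  refine ⟨fun z => q (y z) * H (y z), (hqdiff.comp hydiff).mul (hHdiff.comp hydiff), ?_, ?_⟩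
  · -- disk estimate
    intro z hz
    have hY5000 : Complex.abs (y z) ≤ 1/5000 := hydisk z hz
    have hYball : y z ∈ Metric.ball (0:ℂ) ((1/100 : NNReal) : ℝ) := by
      rw [Metric.mem_ball, dist_zero_right, Complex.norm_eq_abs]
      push_cast
      linarith
    have happ := happrox (y z) hYball D
    rw [zero_add, Complex.norm_eq_abs] at happ
    have habs1 : Complex.abs (q (y z) - T (y z)) ≤ ε/4 := by
      rw [show q (y z) - T (y z) = -(T (y z) - p.partialSum D (y z)) by simp only [hq]; ring,
        map_neg_eq_map]
      exact le_trans happ hCaD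
    have hTY : T (y z) = t z := hTy z hz
    have hH1 : Complex.abs (H (y z) - 1) ≤ ε₁ := hHgood (y z) hY5000
    have hHb : Complex.abs (H (y z)) ≤ 2 := by
      have h1 : ε₁ ≤ 1 := min_le_left _ _
      calc Complex.abs (H (y z)) = Complex.abs ((H (y z) - 1) + 1) := by ring_nf
        _ ≤ Complex.abs (H (y z) - 1) + Complex.abs (1:ℂ) := Complex.abs.add_le _ _
        _ ≤ 2 := by simp; linarith
    have hTb : Complex.abs (T (y z)) ≤ Cb' := by
      have : y z ∈ Metric.closedBall (0:ℂ) (1/100) := by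
        rw [Metric.mem_closedBall, dist_zero_right, Complex.norm_eq_abs]; linarith
      have h9 := hCb _ this
      rw [Complex.norm_eq_abs] at h9
      exact le_trans h9 (le_max_left _ _)
    have hdecomp : q (y z) * H (y z) - t z
        = (q (y z) - T (y z)) * H (y z) + T (y z) * (H (y z) - 1) := by
      rw [← hTY]; ring
    rw [hdecomp]
    have hε₁le : ε₁ ≤ ε/(4*(Cb'+1)) := min_le_right _ _
    calc Complex.abs ((q (y z) - T (y z)) * H (y z) + T (y z) * (H (y z) - 1))
        ≤ Complex.abs ((q (y z) - T (y z)) * H (y z))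
          + Complex.abs (T (y z) * (H (y z) - 1)) := Complex.abs.add_le _ _
      _ = Complex.abs (q (y z) - T (y z)) * Complex.abs (H (y z))
          + Complex.abs (T (y z)) * Complex.abs (H (y z) - 1) := by rw [map_mul, map_mul]
      _ ≤ (ε/4) * 2 + Cb' * (ε/(4*(Cb'+1))) := by
          apply add_le_add
          · exact mul_le_mul habs1 hHb (Complex.abs.nonneg _) (by positivity)
          · exact mul_le_mul hTb (le_trans hH1 hε₁le) (Complex.abs.nonneg _) hCb'0
      _ ≤ ε := by
          have h1 : Cb' * (ε/(4*(Cb'+1))) ≤ ε/4 := by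
            rw [mul_comm, div_mul_eq_mul_div,
              div_le_div_iff₀ (by positivity : (0:ℝ) < 4*(Cb'+1)) (by norm_num : (0:ℝ) < 4)]
            nlinarith [hCb'0, hε.le]
          linarith
  · -- halfplane estimate
    intro z hz
    have hy1 : Complex.abs (y z - 1) ≤ 1/2 := hyhalf z hz
    have hY2 : Complex.abs (y z) ≤ 2 := hyhalf2 z hz
    have hqb : Complex.abs (q (y z)) ≤ A' := by
      have : y z ∈ Metric.closedBall (0:ℂ) 2 := by
        rw [Metric.mem_closedBall, dist_zero_right, Complex.norm_eq_abs]; linarith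
      exact le_trans (hA _ this) (le_max_left _ _)
    have hHb : Complex.abs (H (y z)) ≤ ε₂ := hHbad (y z) hy1
    rw [map_mul]
    calc Complex.abs (q (y z)) * Complex.abs (H (y z)) ≤ A' * ε₂ :=
          mul_le_mul hqb hHb (Complex.abs.nonneg _) hA'0
      _ ≤ ε := by
          rw [hε₂, mul_comm, div_mul_eq_mul_div,
            div_le_iff₀ (by positivity : (0:ℝ) < 2*(A'+1))]
          nlinarith [hA'0, hε.le]

set_option maxHeartbeats 1000000 in
lemma step_lemma (ms : ℕ → ℂ) (hms : ∀ C : ℝ, ∃ s, C < Complex.abs (ms s))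
    (e : ℕ → ℂ) (he1 : ∀ v, Complex.abs (e v) = 1)
    (hsep : ∀ v v', v ≠ v' → ((e v) / (e v')).re < 1)
    (g : ℂ → ℂ) (hg : Differentiable ℂ g)
    (S : ℂ → ℂ) (hS : Differentiable ℂ S) (R : ℝ) (hR : 0 ≤ R) (n : ℕ) :
    ∃ s : ℕ, ∃ F : ℂ → ℂ, Differentiable ℂ F ∧
      R + n < Complex.abs (ms s) ∧
      (∀ z, Complex.abs z ≤ R → Complex.abs (F z) ≤ (1/2)^n) ∧
      (∀ v ≤ n, ∀ z, Complex.abs (z - ms s * e v) ≤ n+1 →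
        Complex.abs (S z + F z - g (z - ms s * e v)) ≤ (1/2)^n) := by
  classical
  set pairs : Finset (ℕ × ℕ) :=
    (Finset.range (n+1) ×ˢ Finset.range (n+1)).filter (fun pr => pr.1 ≠ pr.2) with hpairs
  set vals : Finset ℝ := insert 0 (pairs.image (fun pr => ((e pr.1)/(e pr.2)).re)) with hvals
  have hvne : vals.Nonempty := Finset.insert_nonempty _ _
  set G : ℝ := vals.max' hvne with hG
  have hG0 : 0 ≤ G := Finset.le_max' vals 0 (Finset.mem_insert_self _ _)
  have hG1 : G < 1 := by
    apply (Finset.max'_lt_iff vals hvne).mpr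
    intro x hx
    rw [hvals] at hx
    rcases Finset.mem_insert.mp hx with h | h
    · rw [h]; norm_num
    · obtain ⟨pr, hpr, hprx⟩ := Finset.mem_image.mp h
      rw [hpairs, Finset.mem_filter] at hpr
      rw [← hprx]
      exact hsep pr.1 pr.2 hpr.2
  have hGpair : ∀ v v', v ≤ n → v' ≤ n → v ≠ v' → ((e v)/(e v')).re ≤ G := by
    intro v v' hv hv' hne
    apply Finset.le_max'
    rw [hvals]
    apply Finset.mem_insert_of_mem
    apply Finset.mem_image.mpr
    refine ⟨(v, v'), ?_, rfl⟩
    rw [hpairs, Finset.mem_filter]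
    constructor
    · rw [Finset.mem_product]
      exact ⟨Finset.mem_range.mpr (by omega), Finset.mem_range.mpr (by omega)⟩
    · exact hne
  set η : ℝ := (1 - G)/2 with hη
  have hηpos : 0 < η := by rw [hη]; linarith
  have hη12 : η ≤ 1/2 := by rw [hη]; linarith
  obtain ⟨s, hs⟩ := hms (max (max (2*R) (10000*(n+1)/η)) (max (R+n) ((n+1)/η)))
  set μ : ℝ := Complex.abs (ms s) with hμ
  have hμ1 : 2*R < μ := lt_of_le_of_lt (le_trans (le_max_left _ _) (le_max_left _ _)) hs
  have hμ2 : 10000*(n+1)/η < μ := lt_of_le_of_lt (le_trans (le_max_right _ _) (le_max_left _ _)) hs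
  have hμ3 : R+n < μ := lt_of_le_of_lt (le_trans (le_max_left _ _) (le_max_right _ _)) hs
  have hμ4 : (n+1)/η < μ := lt_of_le_of_lt (le_trans (le_max_right _ _) (le_max_right _ _)) hs
  have hμpos : 0 < μ := lt_of_lt_of_le (by positivity : (0:ℝ) < 10000*(n+1)/η) hμ2.le
  have hms0 : ms s ≠ 0 := by
    intro h; rw [hμ, h] at hμpos; simp at hμpos
  have he0 : ∀ v, e v ≠ 0 := by
    intro v h
    have := he1 v; rw [h] at this; simp at this
  set ε : ℝ := (1/2)^n / (n+1) with hε
  have hεpos : 0 < ε := by positivity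
  set c : ℕ → ℂ := fun v => ms s * e v with hcdef
  have hcabs : ∀ v, Complex.abs (c v) = μ := by
    intro v; rw [hcdef]; simp only [map_mul, he1 v, mul_one, hμ]
  have hPexists : ∀ v : ℕ, ∃ P : ℂ → ℂ, Differentiable ℂ P ∧ (v ≤ n →
      ((∀ z, Complex.abs (z - c v) ≤ n+1 →
          Complex.abs (P z - (g (z - c v) - S z)) ≤ ε) ∧
        (∀ z, (z / c v).re ≤ 1 - η → Complex.abs (P z) ≤ ε))) := by
    intro v
    by_cases hv : v ≤ n
    · have ht : Differentiable ℂ (fun z => g (z - c v) - S z) := by fun_prop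
      obtain ⟨P, h1, h2, h3⟩ := key_lemma _ ht (c v) (n+1) η ε
        (by positivity) hηpos hη12 hεpos
        (by rw [hcabs v]; push_cast; exact hμ2.le)
      exact ⟨P, h1, fun _ => ⟨h2, h3⟩⟩
    · exact ⟨0, differentiable_const 0, fun h => absurd h hv⟩
  choose P hPdiff hPspec using hPexists
  refine ⟨s, fun z => ∑ v ∈ Finset.range (n+1), P v z, ?_, hμ3, ?_, ?_⟩
  · apply Differentiable.fun_sum
    intro v _
    exact hPdiff v
  · -- small on the ball of radius R
    intro z hz
    have hhalf : ∀ v ≤ n, (z / c v).re ≤ 1 - η := by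
      intro v hv
      have h1 : (z / c v).re ≤ Complex.abs z / μ := by
        refine le_trans (Complex.re_le_norm _) ?_
        rw [norm_div, Complex.norm_eq_abs, Complex.norm_eq_abs, hcabs v]
      have h2 : Complex.abs z / μ ≤ 1/2 := by
        rw [div_le_iff₀ hμpos]; linarith
      linarith
    calc Complex.abs (∑ v ∈ Finset.range (n+1), P v z)
        ≤ ∑ v ∈ Finset.range (n+1), Complex.abs (P v z) :=
          Complex.abs.sum_le _ _
      _ ≤ ∑ v ∈ Finset.range (n+1), ε := by
          apply Finset.sum_le_sum
          intro v hv
          have hv' : v ≤ n := Nat.lt_succ_iff.mp (Finset.mem_range.mp hv)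
          exact ((hPspec v hv').2) z (hhalf v hv')
      _ = (n+1) * ε := by rw [Finset.sum_const, Finset.card_range]; push_cast; ring
      _ ≤ (1/2)^n := by
          apply le_of_eq
          rw [hε, mul_comm, div_mul_cancel₀]
          exact (by positivity : (0:ℝ) < (n:ℝ)+1).ne'
  · -- approximation on the disks
    intro v hv z hz
    have hsplit : (∑ v' ∈ Finset.range (n+1), P v' z)
        = P v z + ∑ v' ∈ (Finset.range (n+1)).erase v, P v' z :=
      (Finset.add_sum_erase (Finset.range (n+1)) (fun v' => P v' z)
        (Finset.mem_range.mpr (Nat.lt_succ_of_le hv))).symm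
    have hcross : ∀ v' ≤ n, v' ≠ v → (z / c v').re ≤ 1 - η := by
      intro v' hv' hne
      have hcc : c v / c v' = (e v) / (e v') := by
        rw [hcdef]; exact mul_div_mul_left _ _ hms0
      have hzc : z / c v' = (z - c v) / c v' + (e v) / (e v') := by
        rw [← hcc, sub_div]; ring
      have h1 : ((z - c v) / c v').re ≤ ((n:ℝ)+1) / μ := by
        refine le_trans (Complex.re_le_norm _) ?_
        rw [norm_div, Complex.norm_eq_abs, Complex.norm_eq_abs, hcabs v']
        have : Complex.abs (z - c v) ≤ (n:ℝ)+1 := by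
          rw [hcdef]; push_cast at hz ⊢; exact hz
        gcongr
      have h2 : ((n:ℝ)+1) / μ ≤ η := by
        rw [div_le_iff₀ hμpos]
        rw [div_lt_iff₀ hηpos] at hμ4
        nlinarith
      have h3 : ((e v)/(e v')).re ≤ G := hGpair v v' hv hv' (fun h => hne h.symm)
      rw [hzc, Complex.add_re]
      have : G + η = 1 - η := by rw [hη]; ring
      linarith
    have ht1 : Complex.abs (P v z - (g (z - c v) - S z)) ≤ ε := (hPspec v hv).1 z hz
    have hrw : S z + (∑ v' ∈ Finset.range (n+1), P v' z) - g (z - c v)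
        = (P v z - (g (z - c v) - S z)) + ∑ v' ∈ (Finset.range (n+1)).erase v, P v' z := by
      rw [hsplit]; ring
    rw [hrw]
    have hsum2 : Complex.abs (∑ v' ∈ (Finset.range (n+1)).erase v, P v' z) ≤ n * ε := by
      calc Complex.abs (∑ v' ∈ (Finset.range (n+1)).erase v, P v' z)
          ≤ ∑ v' ∈ (Finset.range (n+1)).erase v, Complex.abs (P v' z) :=
            Complex.abs.sum_le _ _
        _ ≤ ∑ v' ∈ (Finset.range (n+1)).erase v, ε := by
            apply Finset.sum_le_sum
            intro v' hv'
            have hv'n : v' ≤ n := Nat.lt_succ_iff.mp (Finset.mem_range.mp (Finset.mem_of_mem_erase hv'))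
            have hv'ne : v' ≠ v := Finset.ne_of_mem_erase hv'
            exact (hPspec v' hv'n).2 z (hcross v' hv'n hv'ne)
        _ = n * ε := by
            rw [Finset.sum_const, Finset.card_erase_of_mem (Finset.mem_range.mpr (by omega)),
              Finset.card_range]
            simp
    calc Complex.abs ((P v z - (g (z - c v) - S z))
          + ∑ v' ∈ (Finset.range (n+1)).erase v, P v' z)
        ≤ Complex.abs (P v z - (g (z - c v) - S z))
          + Complex.abs (∑ v' ∈ (Finset.range (n+1)).erase v, P v' z) := Complex.abs.add_le _ _
      _ ≤ ε + n * ε := add_le_add ht1 hsum2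
      _ = (n+1) * ε := by ring
      _ ≤ (1/2)^n := by
          apply le_of_eq
          rw [hε, mul_comm, div_mul_cancel₀]
          exact (by positivity : (0:ℝ) < (n:ℝ)+1).ne'

end Construction

set_option maxHeartbeats 2000000 in
theorem stmt_13 (ms : ℕ → ℂ) (hms : ∀ C : ℝ, ∃ s, C < ‖ms s‖)
    (θ : ℕ → ℝ) (hθ : ∀ v, θ v ∈ Set.Ico (0 : ℝ) 1) (hinj : Function.Injective θ)
    (g : Entire) :
    ∃ x : Entire, ∃ lam : ℕ → ℕ,
      ∀ v : ℕ, ∀ K : Set ℂ, IsCompact K →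
        TendstoUniformlyOn
          (fun n z => x.1 (z + ms (lam n) * Complex.exp (2 * Real.pi * Complex.I * θ v)))
          g.1 atTop K := by
  classical
  set gf : ℂ → ℂ := fun z => g.1 z with hgf
  have hg : Differentiable ℂ gf := g.2
  set e : ℕ → ℂ := fun v => Complex.exp (2 * Real.pi * Complex.I * θ v) with he
  have hexprw : ∀ v, (2 * (Real.pi:ℂ) * Complex.I * (θ v:ℂ))
      = ((2 * Real.pi * θ v : ℝ) : ℂ) * Complex.I := by
    intro v; push_cast; ring
  have he1 : ∀ v, Complex.abs (e v) = 1 := by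
    intro v
    rw [he]; simp only []
    rw [hexprw v, ← Complex.norm_eq_abs, Complex.norm_exp]
    simp
  have hsep : ∀ v v', v ≠ v' → ((e v) / (e v')).re < 1 := by
    intro v v' hne
    have hd : e v / e v' = Complex.exp (((2*Real.pi*(θ v - θ v') : ℝ) : ℂ) * Complex.I) := by
      rw [he]; simp only []
      rw [← Complex.exp_sub]
      congr 1
      push_cast; ring
    rw [hd, Complex.exp_ofReal_mul_I_re]
    rcases lt_or_eq_of_le (Real.cos_le_one (2*Real.pi*(θ v - θ v'))) with h | h
    · exact h
    · exfalso
      obtain ⟨k, hk⟩ := (Real.cos_eq_one_iff _).mp h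
      have hpi : (0:ℝ) < 2*Real.pi := by positivity
      have h6 : 2*Real.pi * ((θ v - θ v') - k) = 0 := by nlinarith [hk]
      have h7 : (θ v - θ v') - k = 0 := by
        rcases mul_eq_zero.mp h6 with h | h
        · exact absurd h (ne_of_gt hpi)
        · exact h
      have h1 := (hθ v).1; have h2 := (hθ v).2
      have h3 := (hθ v').1; have h4 := (hθ v').2
      have hk1 : (-1:ℝ) < (k:ℝ) := by linarith
      have hk2 : ((k:ℝ)) < 1 := by linarith
      have hk0 : k = 0 := by
        have ha : (-1:ℤ) < k := by exact_mod_cast hk1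
        have hb : k < 1 := by exact_mod_cast hk2
        omega
      rw [hk0] at h7
      push_cast at h7
      exact hne (hinj (by linarith))
  -- totalized step function
  have hstep : ∀ (S : ℂ → ℂ) (R : ℝ) (n : ℕ), ∃ (s : ℕ) (F : ℂ → ℂ),
      (Differentiable ℂ S ∧ 0 ≤ R) → (Differentiable ℂ F ∧
        R + n < Complex.abs (ms s) ∧
        (∀ z, Complex.abs z ≤ R → Complex.abs (F z) ≤ (1/2)^n) ∧
        (∀ v ≤ n, ∀ z, Complex.abs (z - ms s * e v) ≤ n+1 →
          Complex.abs (S z + F z - gf (z - ms s * e v)) ≤ (1/2)^n)) := by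
    intro S R n
    by_cases h : Differentiable ℂ S ∧ 0 ≤ R
    · obtain ⟨s, F, h1, h2, h3, h4⟩ := step_lemma ms hms e he1 hsep gf hg S h.1 R h.2 n
      exact ⟨s, F, fun _ => ⟨h1, h2, h3, h4⟩⟩
    · exact ⟨0, 0, fun hh => absurd hh h⟩
  choose sf Ff hsf using hstep
  -- the recursive construction
  set X : ℕ → (ℂ → ℂ) × ℝ := fun n => Nat.rec ((fun _ => (0:ℂ)), (1:ℝ))
    (fun n prev => (prev.1 + Ff prev.1 prev.2 (n+1),
      max prev.2 (Complex.abs (ms (sf prev.1 prev.2 (n+1))) + (n+1)) + 1)) n with hX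
  set Fst : ℕ → ℂ → ℂ := fun n => Ff (X n).1 (X n).2 (n+1) with hFst
  set sst : ℕ → ℕ := fun n => sf (X n).1 (X n).2 (n+1) with hsst
  have hXsucc : ∀ n, X (n+1) = ((X n).1 + Fst n,
      max (X n).2 (Complex.abs (ms (sst n)) + (n+1)) + 1) := fun n => rfl
  have hX0 : X 0 = ((fun _ => (0:ℂ)), (1:ℝ)) := rfl
  have hFst_eq : ∀ n, Fst n = Ff (X n).1 (X n).2 (n+1) := fun n => rfl
  have hsst_eq : ∀ n, sst n = sf (X n).1 (X n).2 (n+1) := fun n => rfl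
  clear_value X Fst sst
  have hinv : ∀ n, Differentiable ℂ (X n).1 ∧ 0 ≤ (X n).2 := by
    intro n
    induction n with
    | zero =>
        refine ⟨?_, ?_⟩
        · rw [hX0]; exact differentiable_const 0
        · rw [hX0]; norm_num
    | succ n ih =>
        have hs := hsf (X n).1 (X n).2 (n+1) ih
        rw [hXsucc n]
        constructor
        · rw [hFst_eq n]; exact ih.1.add hs.1
        · have := le_max_left (X n).2 (Complex.abs (ms (sst n)) + (n+1))
          simp only []
          linarith [ih.2]
  have hspec := fun n => hsf (X n).1 (X n).2 (n+1) (hinv n)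
  have hFdiff : ∀ n, Differentiable ℂ (Fst n) := by
    intro n; rw [hFst_eq n]; exact (hspec n).1
  have hsmall : ∀ n : ℕ, ∀ z, Complex.abs z ≤ (X n).2 →
      Complex.abs (Fst n z) ≤ (1/2)^(n+1) := by
    intro n; rw [hFst_eq n]; exact (hspec n).2.2.1
  have hcast2 : ∀ n : ℕ, ((n+1:ℕ):ℝ) + 1 = (n:ℝ) + 2 := by intro n; push_cast; ring
  have hdisks : ∀ n : ℕ, ∀ v, v ≤ n+1 → ∀ z,
      Complex.abs (z - ms (sst n) * e v) ≤ (n:ℝ)+2 →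
      Complex.abs ((X n).1 z + Fst n z - gf (z - ms (sst n) * e v)) ≤ (1/2)^(n+1) := by
    intro n v hv z hz
    rw [hFst_eq n, hsst_eq n]
    rw [hsst_eq n] at hz
    refine (hspec n).2.2.2 v hv z ?_
    rw [hcast2 n]
    exact hz
  have hRstep : ∀ n, (X n).2 + 1 ≤ (X (n+1)).2 := by
    intro n
    rw [hXsucc n]
    simp only []
    have := le_max_left (X n).2 (Complex.abs (ms (sst n)) + (n+1))
    linarith
  have hRmono : Monotone (fun n => (X n).2) :=
    monotone_nat_of_le_succ (fun n => by linarith [hRstep n])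
  have hR1 : ∀ n : ℕ, (n:ℝ) + 1 ≤ (X n).2 := by
    intro n
    induction n with
    | zero => rw [hX0]; norm_num
    | succ n ih =>
        have h2 := hRstep n
        have h3 : ((n+1:ℕ):ℝ) + 1 ≤ (X (n+1)).2 := by push_cast; linarith
        exact h3
  have hRbig : ∀ n, Complex.abs (ms (sst n)) + (n+1) + 1 ≤ (X (n+1)).2 := by
    intro n
    rw [hXsucc n]
    simp only []
    have := le_max_right (X n).2 (Complex.abs (ms (sst n)) + (n+1))
    linarith
  have hSsum : ∀ n : ℕ, ∀ z, (X n).1 z = ∑ k ∈ Finset.range n, Fst k z := by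
    intro n
    induction n with
    | zero => intro z; rw [hX0]; simp
    | succ n ih =>
        intro z
        rw [hXsucc n]
        simp only [Pi.add_apply]
        rw [ih z, Finset.sum_range_succ]
  -- summability
  have hsummable : ∀ w : ℂ, Summable (fun k => Fst k w) := by
    intro w
    apply Summable.of_norm_bounded_eventually (g := fun k => (1/2:ℝ)^k)
      (summable_geometric_of_lt_one (by norm_num) (by norm_num))
    rw [Nat.cofinite_eq_atTop]
    filter_upwards [eventually_ge_atTop ⌈Complex.abs w⌉₊] with k hk
    have hwk : Complex.abs w ≤ (X k).2 := by
      have h1 : Complex.abs w ≤ (⌈Complex.abs w⌉₊ : ℝ) := Nat.le_ceil _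
      have h2 : ((⌈Complex.abs w⌉₊ : ℕ) : ℝ) ≤ (k : ℝ) := by exact_mod_cast hk
      linarith [hR1 k]
    rw [Complex.norm_eq_abs]
    calc Complex.abs (Fst k w) ≤ (1/2)^(k+1) := hsmall k w hwk
      _ ≤ (1/2)^k := by
          rw [pow_succ]
          nlinarith [pow_pos (by norm_num : (0:ℝ) < 1/2) k]
  -- the universal entire function
  set x : ℂ → ℂ := fun w => ∑' k, Fst k w with hx
  have htail : ∀ N (w : ℂ), Complex.abs w ≤ (X N).2 →
      Complex.abs (x w - ∑ k ∈ Finset.range N, Fst k w) ≤ (1/2)^N := by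
    intro N w hw
    have h1 := Summable.sum_add_tsum_nat_add N (hsummable w)
    have h2 : x w - ∑ k ∈ Finset.range N, Fst k w = ∑' k, Fst (k + N) w := by
      rw [hx]; simp only []; linear_combination (h1).symm
    rw [h2]
    have hs2 : Summable (fun k => Fst (k + N) w) := (summable_nat_add_iff N).mpr (hsummable w)
    have hbound : ∀ k : ℕ, ‖Fst (k + N) w‖ ≤ (1/2:ℝ)^(k + N + 1) := by
      intro k
      rw [Complex.norm_eq_abs]
      apply hsmall
      exact le_trans hw (hRmono (Nat.le_add_left N k))
    have hsg : Summable (fun k : ℕ => (1/2:ℝ)^(k + N + 1)) := by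
      have : (fun k : ℕ => (1/2:ℝ)^(k + N + 1)) = fun k => ((1/2:ℝ)^(N+1)) * (1/2)^k := by
        funext k; rw [show k + N + 1 = (N+1) + k by omega, pow_add]
      rw [this]
      exact (summable_geometric_of_lt_one (by norm_num) (by norm_num)).mul_left _
    calc Complex.abs (∑' k, Fst (k + N) w) ≤ ∑' k, ‖Fst (k + N) w‖ :=
          norm_tsum_le_tsum_norm hs2.norm
      _ ≤ ∑' k : ℕ, (1/2:ℝ)^(k + N + 1) := Summable.tsum_le_tsum hbound hs2.norm hsg
      _ = (1/2:ℝ)^(N+1) * ∑' k : ℕ, (1/2:ℝ)^k := by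
          rw [← tsum_mul_left]
          congr 1; funext k; rw [show k + N + 1 = (N+1) + k by omega, pow_add]
      _ = (1/2:ℝ)^(N+1) * 2 := by
          rw [tsum_geometric_of_lt_one (by norm_num) (by norm_num)]; norm_num
      _ = (1/2)^N := by rw [pow_succ]; ring
  have hxdOn : ∀ M : ℝ, 0 < M → DifferentiableOn ℂ x (Metric.ball (0:ℂ) M) := by
    intro M hM
    have hTU : TendstoUniformlyOn (fun N w => ∑ k ∈ Finset.range N, Fst k w) x atTop
        (Metric.ball (0:ℂ) M) := by
      rw [Metric.tendstoUniformlyOn_iff]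
      intro ε hε
      obtain ⟨N₀, hN₀⟩ := exists_pow_lt_of_lt_one hε (by norm_num : (1/2:ℝ) < 1)
      filter_upwards [eventually_ge_atTop (max N₀ ⌈M⌉₊)] with N hN w hw
      have hNN₀ : N₀ ≤ N := le_trans (le_max_left _ _) hN
      have hwN : Complex.abs w ≤ (X N).2 := by
        rw [Metric.mem_ball, dist_zero_right, Complex.norm_eq_abs] at hw
        have h1 : M ≤ (⌈M⌉₊ : ℝ) := Nat.le_ceil _
        have h2 : ((⌈M⌉₊ : ℕ) : ℝ) ≤ (N : ℝ) := by
          exact_mod_cast le_trans (le_max_right N₀ ⌈M⌉₊) hN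
        linarith [hR1 N]
      rw [dist_comm, Complex.dist_eq]
      calc Complex.abs (∑ k ∈ Finset.range N, Fst k w - x w)
          = Complex.abs (x w - ∑ k ∈ Finset.range N, Fst k w) := by
            rw [← map_neg_eq_map]; congr 1; ring
        _ ≤ (1/2)^N := htail N w hwN
        _ ≤ (1/2)^N₀ := pow_le_pow_of_le_one (by norm_num) (by norm_num) hNN₀
        _ < ε := hN₀
    apply hTU.tendstoLocallyUniformlyOn.differentiableOn _ Metric.isOpen_ball
    filter_upwards with N
    exact DifferentiableOn.fun_sum fun k _ => ((hFdiff k).differentiableOn)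
  have hxdiff : Differentiable ℂ x := by
    intro w
    have h1 : w ∈ Metric.ball (0:ℂ) (Complex.abs w + 1) := by
      rw [Metric.mem_ball, dist_zero_right, Complex.norm_eq_abs]; linarith
    exact ((hxdOn (Complex.abs w + 1) (by positivity)) w h1).differentiableAt
      (Metric.isOpen_ball.mem_nhds h1)
  -- main estimate
  have hmain : ∀ n : ℕ, ∀ v, v ≤ n+1 → ∀ z : ℂ, Complex.abs z ≤ (n:ℝ)+2 →
      Complex.abs (x (z + ms (sst n) * e v) - gf z) ≤ (1/2)^n := by
    intro n v hv z hz
    set w : ℂ := z + ms (sst n) * e v with hwdef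
    have hw1 : w - ms (sst n) * e v = z := by rw [hwdef]; ring
    have hdisk := hdisks n v hv w (by rw [hw1]; exact hz)
    rw [hw1] at hdisk
    have hsum : (X n).1 w + Fst n w = ∑ k ∈ Finset.range (n+1), Fst k w := by
      rw [hSsum n w, Finset.sum_range_succ]
    rw [hsum] at hdisk
    have hwabs : Complex.abs w ≤ (X (n+1)).2 := by
      calc Complex.abs w ≤ Complex.abs z + Complex.abs (ms (sst n) * e v) := by
            rw [hwdef]; exact Complex.abs.add_le _ _
        _ = Complex.abs z + Complex.abs (ms (sst n)) := by rw [map_mul, he1 v, mul_one]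
        _ ≤ Complex.abs (ms (sst n)) + (n+1) + 1 := by push_cast; linarith
        _ ≤ (X (n+1)).2 := hRbig n
    have ht := htail (n+1) w hwabs
    calc Complex.abs (x w - gf z)
        = Complex.abs ((x w - ∑ k ∈ Finset.range (n+1), Fst k w)
          + (∑ k ∈ Finset.range (n+1), Fst k w - gf z)) := by congr 1; ring
      _ ≤ Complex.abs (x w - ∑ k ∈ Finset.range (n+1), Fst k w)
          + Complex.abs (∑ k ∈ Finset.range (n+1), Fst k w - gf z) := Complex.abs.add_le _ _
      _ ≤ (1/2)^(n+1) + (1/2)^(n+1) := add_le_add ht hdisk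
      _ = (1/2)^n := by rw [pow_succ]; ring
  -- conclusion
  refine ⟨⟨⟨x, hxdiff.continuous⟩, hxdiff⟩, fun n => sst n, ?_⟩
  intro v K hK
  obtain ⟨M, hM⟩ := hK.isBounded.subset_closedBall 0
  show TendstoUniformlyOn (fun n z => x (z + ms (sst n) * e v)) gf atTop K
  rw [Metric.tendstoUniformlyOn_iff]
  intro ε hε
  obtain ⟨N₀, hN₀⟩ := exists_pow_lt_of_lt_one hε (by norm_num : (1/2:ℝ) < 1)
  filter_upwards [eventually_ge_atTop (max N₀ (max v ⌈max M 0⌉₊))] with n hn z hz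
  have hNN₀ : N₀ ≤ n := le_trans (le_max_left _ _) hn
  have hvn : v ≤ n + 1 := by
    have := le_trans (le_trans (le_max_left v ⌈max M 0⌉₊) (le_max_right N₀ _)) hn
    omega
  have hzb : Complex.abs z ≤ (n:ℝ) + 2 := by
    have h1 : Complex.abs z ≤ max M 0 := by
      have := hM hz
      rw [Metric.mem_closedBall, dist_zero_right, Complex.norm_eq_abs] at this
      exact le_trans this (le_max_left _ _)
    have h2 : max M 0 ≤ (⌈max M 0⌉₊ : ℝ) := Nat.le_ceil _
    have h3 : ((⌈max M 0⌉₊ : ℕ) : ℝ) ≤ (n : ℝ) := by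
      exact_mod_cast le_trans (le_trans (le_max_right v _) (le_max_right N₀ _)) hn
    linarith
  rw [dist_comm, Complex.dist_eq]
  calc Complex.abs (x (z + ms (sst n) * e v) - gf z) ≤ (1/2)^n := hmain n v hvn z hzb
    _ ≤ (1/2)^N₀ := pow_le_pow_of_le_one (by norm_num) (by norm_num) hNN₀
    _ < ε := hN₀
end
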